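/- arXiv:2407.06719 — 2 statements merged into one kernel-verified Lean document; each statement's English description precedes it below -/
import Mathlib

section
/- There are exactly four Borel clones whose finitary restriction is the set of all finitary monotone Boolean functions, namely: (i) all monotone Borel functions; (ii) all increasing-continuous Borel functions; (iii) all decreasing-continuous Borel functions; (iv) all continuous monotone functions. -/
open scoped Classical

/-- An arity: `some n` is the finite arity `n ≥ 1`; `none` is the countably infinite arity ω. -/
abbrev Arity := Option ℕ+

/-- The index set of an arity. -/
abbrev Idx : Arity → Type
  | some n => Fin (n : ℕ)
  | none => ℕ

/-- A Boolean function of some arity `1 ≤ n ≤ ω`.  The input space `Idx a → Bool`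
carries the product topology (with `Bool` discrete), the product σ-algebra (= Borel),
and the coordinatewise partial order. -/
abbrev BFun : Type := Σ a : Arity, (Idx a → Bool) → Bool

/-- A clone: a set of Boolean functions of arities `1 ≤ n ≤ ω` containing all projections
and closed under composition. -/
structure IsClone (F : Set BFun) : Prop where
  proj : ∀ (a : Arity) (i : Idx a), (⟨a, fun x => x i⟩ : BFun) ∈ F
  comp : ∀ (a b : Arity) (g : (Idx a → Bool) → Bool) (f : Idx a → (Idx b → Bool) → Bool),
      (⟨a, g⟩ : BFun) ∈ F → (∀ i, (⟨b, f i⟩ : BFun) ∈ F) →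
      (⟨b, fun x => g fun i => f i x⟩ : BFun) ∈ F

/-- The clone generated by a set of Boolean functions. -/
def cloneGen (G : Set BFun) : Set BFun := ⋂₀ {F : Set BFun | IsClone F ∧ G ⊆ F}

/-- `f` has finite arity. -/
def finitary (f : BFun) : Prop := f.1 ≠ none

/-- `f` is Borel: the preimage of `1` is a Borel set. -/
def IsBorelFun (f : BFun) : Prop := MeasurableSet {x | f.2 x = true}

/-- `f` is continuous (equivalently, depends on only finitely many coordinates). -/
def IsContFun (f : BFun) : Prop := Continuous f.2

/-- `f(0⃗) = 0`. -/
def PresBot (f : BFun) : Prop := f.2 (fun _ => false) = false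

/-- `f(1⃗) = 1`. -/
def PresTop (f : BFun) : Prop := f.2 (fun _ => true) = true

/-- `f` vanishes on a neighborhood of `0⃗`, i.e. `0⃗` is not in the closure of `f⁻¹(1)`. -/
def VanishNearBot (f : BFun) : Prop := (fun _ => false) ∉ closure {x | f.2 x = true}

/-- `f` equals `1` on a neighborhood of `1⃗`, i.e. `1⃗` is not in the closure of `f⁻¹(0)`. -/
def OneNearTop (f : BFun) : Prop := (fun _ => true) ∉ closure {x | f.2 x = false}

/-- Countably infinite disjunction `⋁ : 2^ω → 2`. -/
noncomputable def bigOr : (ℕ → Bool) → Bool := fun x => decide (∃ i, x i = true)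

/-- Countably infinite conjunction `⋀ : 2^ω → 2`. -/
noncomputable def bigAnd : (ℕ → Bool) → Bool := fun x => decide (∀ i, x i = true)

/-- `liminf : 2^ω → 2`, equal to `1` iff all but finitely many bits are `1`. -/
noncomputable def liminfF : (ℕ → Bool) → Bool := fun x => decide (∃ N, ∀ j, N ≤ j → x j = true)

/-- `f` is increasing-continuous: monotone and `f(sup_q x_q) = sup_q f(x_q)` for every
coordinatewise increasing ω-sequence of inputs. -/
def IncrCont (f : BFun) : Prop :=
  Monotone f.2 ∧ ∀ x : ℕ → Idx f.1 → Bool, Monotone x →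
    f.2 (fun i => decide (∃ q, x q i = true)) = decide (∃ q, f.2 (x q) = true)

/-- `f` is decreasing-continuous: monotone and `f(inf_q x_q) = inf_q f(x_q)` for every
coordinatewise decreasing ω-sequence of inputs. -/
def DecrCont (f : BFun) : Prop :=
  Monotone f.2 ∧ ∀ x : ℕ → Idx f.1 → Bool, Antitone x →
    f.2 (fun i => decide (∀ q, x q i = true)) = decide (∀ q, f.2 (x q) = true)

def BorelClass : Set BFun := {f | IsBorelFun f}

def finRes (F : Set BFun) : Set BFun := {f ∈ F | finitary f}

def M1 : Set BFun := {f | IsBorelFun f ∧ Monotone f.2}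
def M2 : Set BFun := {f | IsBorelFun f ∧ IncrCont f}
def M3 : Set BFun := {f | IsBorelFun f ∧ DecrCont f}
def M4 : Set BFun := {f | IsContFun f ∧ Monotone f.2}

noncomputable section BCaux
open MeasureTheory Set

/-- cylinder neighborhoods in products of discrete spaces over ℕ -/
lemma BC.cyl_of_isOpen {α : Type*} [TopologicalSpace α] [DiscreteTopology α]
    {U : Set (ℕ → α)} (hU : IsOpen U) {x : ℕ → α} (hx : x ∈ U) :
    ∃ N, ∀ y : ℕ → α, (∀ i < N, y i = x i) → y ∈ U := by
  have h : U ∈ nhds x := hU.mem_nhds hx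
  rw [nhds_pi, Filter.mem_pi] at h
  obtain ⟨I, hIf, t, ht, hsub⟩ := h
  obtain ⟨N, hN⟩ := hIf.bddAbove
  refine ⟨N + 1, fun y hy => hsub ?_⟩
  intro i hi
  have hiN : i < N + 1 := Nat.lt_succ_of_le (hN hi)
  rw [hy i hiN]
  exact mem_of_mem_nhds (ht i)

def BC.UpClosed (A : Set (ℕ → Bool)) : Prop := ∀ ⦃x y : ℕ → Bool⦄, x ≤ y → x ∈ A → y ∈ A

namespace BCDyck

variable (P : Set (Set (ℕ → Bool)))

def Sep (A C : Set (ℕ → Bool)) : Prop := ∃ S ∈ P, A ⊆ S ∧ Disjoint S C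

lemma sep_iUnion {A C : ℕ → Set (ℕ → Bool)}
    (hI : ∀ A : ℕ → Set (ℕ → Bool), (∀ n, A n ∈ P) → (⋂ n, A n) ∈ P)
    (hU : ∀ A : ℕ → Set (ℕ → Bool), (∀ n, A n ∈ P) → (⋃ n, A n) ∈ P)
    (h : ∀ n m, Sep P (A n) (C m)) : Sep P (⋃ n, A n) (⋃ m, C m) := by
  choose S hSP hAS hdis using h
  refine ⟨⋃ n, ⋂ m, S n m, hU _ fun n => hI _ fun m => hSP n m, ?_, ?_⟩
  · exact iUnion_mono fun n => subset_iInter fun m => hAS n m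
  · rw [disjoint_iUnion_left]
    intro n
    rw [disjoint_iUnion_right]
    intro m
    exact (hdis n m).mono_left (iInter_subset _ m)

def Ncyl (n : ℕ) (σ : ℕ → ℕ) : Set (ℕ → ℕ) := {τ | ∀ i < n, τ i = σ i}

lemma Ncyl_zero (σ : ℕ → ℕ) : Ncyl 0 σ = univ := by
  ext τ; simp [Ncyl]

lemma Ncyl_succ (n : ℕ) (σ : ℕ → ℕ) :
    Ncyl n σ = ⋃ k, Ncyl (n+1) (Function.update σ n k) := by
  ext τ
  simp only [mem_iUnion]
  constructor
  · intro h
    refine ⟨τ n, fun i hi => ?_⟩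
    rcases Nat.lt_succ_iff_lt_or_eq.1 hi with hi | rfl
    · rw [Function.update_of_ne hi.ne, h i hi]
    · rw [Function.update_self]
  · rintro ⟨k, hk⟩ i hi
    have := hk i (hi.trans (Nat.lt_succ_self n))
    rwa [Function.update_of_ne hi.ne] at this

lemma Ncyl_congr {n : ℕ} {σ σ' : ℕ → ℕ} (h : ∀ i < n, σ i = σ' i) :
    Ncyl n σ = Ncyl n σ' := by
  ext τ; constructor <;> intro hτ i hi
  · rw [hτ i hi, h i hi]
  · rw [hτ i hi, ← h i hi]

lemma Ncyl_mono {n m : ℕ} (h : n ≤ m) (σ : ℕ → ℕ) : Ncyl m σ ⊆ Ncyl n σ :=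
  fun _ hτ i hi => hτ i (hi.trans_le h)


section Main

variable {P}

lemma coord_mem_P (hcl : ∀ A : Set (ℕ → Bool), IsClopen A → BC.UpClosed A → A ∈ P)
    (i : ℕ) : {z : ℕ → Bool | z i = true} ∈ P := by
  have he : {z : ℕ → Bool | z i = true} = (fun z : ℕ → Bool => z i) ⁻¹' {true} := rfl
  apply hcl
  · rw [he]
    exact ⟨IsClosed.preimage (continuous_apply i) (isClosed_discrete _),
      IsOpen.preimage (continuous_apply i) (isOpen_discrete _)⟩
  · intro x y hxy hx
    exact Bool.le_iff_imp.mp (hxy i) hx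

lemma main_sep (hcl : ∀ A : Set (ℕ → Bool), IsClopen A → BC.UpClosed A → A ∈ P)
    (hU : ∀ A : ℕ → Set (ℕ → Bool), (∀ n, A n ∈ P) → (⋃ n, A n) ∈ P)
    (hI : ∀ A : ℕ → Set (ℕ → Bool), (∀ n, A n ∈ P) → (⋂ n, A n) ∈ P)
    {A C : Set (ℕ → Bool)} (hA : AnalyticSet A) (hC : AnalyticSet C)
    (h : ∀ a ∈ A, ∀ c ∈ C, ¬ a ≤ c) : Sep P A C := by
  rw [AnalyticSet_def] at hA hC
  rcases hA with rfl | ⟨f, hf, rfl⟩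
  · exact ⟨∅, hcl ∅ isClopen_empty (fun _ _ _ h => h), subset_rfl, disjoint_bot_left⟩
  rcases hC with rfl | ⟨g, hg, rfl⟩
  · exact ⟨univ, hcl univ isClopen_univ (fun _ _ _ _ => trivial), subset_univ _,
      disjoint_bot_right⟩
  by_contra hsep
  have step : ∀ (n : ℕ) (σ τ : ℕ → ℕ), ¬ Sep P (f '' Ncyl n σ) (g '' Ncyl n τ) →
      ∃ k l, ¬ Sep P (f '' Ncyl (n+1) (Function.update σ n k))
        (g '' Ncyl (n+1) (Function.update τ n l)) := by
    intro n σ τ hb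
    by_contra hc
    push_neg at hc
    apply hb
    have h1 : f '' Ncyl n σ = ⋃ k, f '' Ncyl (n+1) (Function.update σ n k) := by
      rw [Ncyl_succ n σ, image_iUnion]
    have h2 : g '' Ncyl n τ = ⋃ l, g '' Ncyl (n+1) (Function.update τ n l) := by
      rw [Ncyl_succ n τ, image_iUnion]
    rw [h1, h2]
    exact sep_iUnion P hI hU fun k l => hc k l
  choose K L hKL using step
  have hBad0 : ¬ Sep P (f '' Ncyl 0 (fun _ => 0)) (g '' Ncyl 0 (fun _ => 0)) := by
    rw [Ncyl_zero, image_univ, image_univ]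
    exact hsep
  let next : ℕ → (ℕ → ℕ) × (ℕ → ℕ) → (ℕ → ℕ) × (ℕ → ℕ) := fun n p =>
    if hb : ¬ Sep P (f '' Ncyl n p.1) (g '' Ncyl n p.2) then
      ⟨Function.update p.1 n (K n p.1 p.2 hb), Function.update p.2 n (L n p.1 p.2 hb)⟩
    else p
  let st : ℕ → (ℕ → ℕ) × (ℕ → ℕ) := fun n => Nat.rec ⟨fun _ => 0, fun _ => 0⟩ next n
  have hstep : ∀ n, st (n + 1) = next n (st n) := fun n => rfl
  have hbad : ∀ n, ¬ Sep P (f '' Ncyl n (st n).1) (g '' Ncyl n (st n).2) := by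
    intro n
    induction n with
    | zero => exact hBad0
    | succ n ih =>
      rw [hstep n]
      show ¬ Sep P (f '' Ncyl (n+1) (next n (st n)).1) (g '' Ncyl (n+1) (next n (st n)).2)
      simp only [next, dif_pos ih]
      exact hKL n (st n).1 (st n).2 ih
  have hcoh : ∀ n i, i < n → (st n).1 i = (st (n+1)).1 i ∧ (st n).2 i = (st (n+1)).2 i := by
    intro n i hi
    rw [hstep n]
    show (st n).1 i = (next n (st n)).1 i ∧ (st n).2 i = (next n (st n)).2 i
    simp only [next, dif_pos (hbad n)]
    exact ⟨(Function.update_of_ne hi.ne _ _).symm, (Function.update_of_ne hi.ne _ _).symm⟩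
  let sig : ℕ → ℕ := fun i => (st (i+1)).1 i
  let tau : ℕ → ℕ := fun i => (st (i+1)).2 i
  have hstab : ∀ n i, i < n → (st n).1 i = sig i ∧ (st n).2 i = tau i := by
    intro n
    induction n with
    | zero => intro i hi; exact absurd hi (Nat.not_lt_zero i)
    | succ n ih =>
      intro i hi
      rcases Nat.lt_succ_iff_lt_or_eq.1 hi with hi | rfl
      · rcases hcoh n i hi with ⟨h1, h2⟩
        rcases ih i hi with ⟨h3, h4⟩
        exact ⟨by rw [← h1, h3], by rw [← h2, h4]⟩
      · exact ⟨rfl, rfl⟩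
  have hNcyl : ∀ n, Ncyl n (st n).1 = Ncyl n sig ∧ Ncyl n (st n).2 = Ncyl n tau := fun n =>
    ⟨Ncyl_congr fun i hi => (hstab n i hi).1, Ncyl_congr fun i hi => (hstab n i hi).2⟩
  have hxA : f sig ∈ range f := mem_range_self _
  have hyC : g tau ∈ range g := mem_range_self _
  have hnle : ¬ f sig ≤ g tau := h _ hxA _ hyC
  obtain ⟨i, hi1, hi2⟩ : ∃ i, f sig i = true ∧ g tau i = false := by
    by_contra hc
    push_neg at hc
    apply hnle
    intro j
    rw [Bool.le_iff_imp]
    intro h1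
    exact eq_true_of_ne_false (fun h2 => hc j h1 h2)
  have hWf : IsOpen ((fun z : ℕ → Bool => z i) ⁻¹' {true}) :=
    IsOpen.preimage (continuous_apply i) (isOpen_discrete _)
  have hWg : IsOpen ((fun z : ℕ → Bool => z i) ⁻¹' {false}) :=
    IsOpen.preimage (continuous_apply i) (isOpen_discrete _)
  obtain ⟨n₁, hn₁⟩ := BC.cyl_of_isOpen (hWf.preimage hf)
    (show sig ∈ f ⁻¹' ((fun z : ℕ → Bool => z i) ⁻¹' {true}) by simp [hi1])
  obtain ⟨n₂, hn₂⟩ := BC.cyl_of_isOpen (hWg.preimage hg)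
    (show tau ∈ g ⁻¹' ((fun z : ℕ → Bool => z i) ⁻¹' {false}) by simp [hi2])
  apply hbad (max n₁ n₂)
  refine ⟨{z : ℕ → Bool | z i = true}, coord_mem_P hcl i, ?_, ?_⟩
  · rintro _ ⟨ρ, hρ, rfl⟩
    rw [(hNcyl (max n₁ n₂)).1] at hρ
    exact hn₁ ρ (fun j hj => hρ j (hj.trans_le (le_max_left _ _)))
  · rw [disjoint_right]
    rintro _ ⟨ρ, hρ, rfl⟩
    rw [(hNcyl (max n₁ n₂)).2] at hρ
    have hgρ : g ρ ∈ (fun z : ℕ → Bool => z i) ⁻¹' {false} :=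
      hn₂ ρ (fun j hj => hρ j (hj.trans_le (le_max_right _ _)))
    simp only [mem_preimage, mem_singleton_iff] at hgρ
    simp [mem_setOf_eq, hgρ]

theorem dyck (hcl : ∀ A : Set (ℕ → Bool), IsClopen A → BC.UpClosed A → A ∈ P)
    (hU : ∀ A : ℕ → Set (ℕ → Bool), (∀ n, A n ∈ P) → (⋃ n, A n) ∈ P)
    (hI : ∀ A : ℕ → Set (ℕ → Bool), (∀ n, A n ∈ P) → (⋂ n, A n) ∈ P)
    {B : Set (ℕ → Bool)} (hB : MeasurableSet B) (hm : BC.UpClosed B) : B ∈ P := by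
  haveI : PolishSpace (ℕ → Bool) := @PolishSpace.mk _ _ inferInstance inferInstance
  obtain ⟨S, hSP, hBS, hdis⟩ := main_sep hcl hU hI hB.analyticSet hB.compl.analyticSet
    (fun a ha c hc hle => hc (hm hle ha))
  have hSB : S = B := le_antisymm (by
    intro x hx
    by_contra hxB
    exact (disjoint_left.1 hdis) hx hxB) hBS
  rwa [hSB] at hSP

end Main
end BCDyck

namespace BC

open MeasureTheory Set

instance idxCountable (a : Arity) : Countable (Idx a) := by cases a <;> exact inferInstance

lemma pre_of_measurable {α : Type*} [MeasurableSpace α] {f : α → Bool} (h : Measurable f) :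
    MeasurableSet {x | f x = true} := h (MeasurableSet.of_discrete (s := {true}))

lemma measurable_of_pre {α : Type*} [MeasurableSpace α] {f : α → Bool}
    (h : MeasurableSet {x | f x = true}) : Measurable f := by
  apply measurable_to_countable'
  intro b
  cases b
  · have he : f ⁻¹' {false} = {x | f x = true}ᶜ := by ext x; simp
    rw [he]; exact h.compl
  · exact h

lemma fin_measurable {m : ℕ} (S : Set (Fin m → Bool)) : MeasurableSet S :=
  S.toFinite.measurableSet

lemma finitary_isBorel (n : ℕ+) (g : (Idx (some n) → Bool) → Bool) :
    IsBorelFun ⟨some n, g⟩ := fin_measurable _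

lemma finitary_isCont (n : ℕ+) (g : (Idx (some n) → Bool) → Bool) :
    IsContFun ⟨some n, g⟩ := continuous_of_discreteTopology

lemma le_sup {ι : Type*} (x : ℕ → ι → Bool) (q : ℕ) :
    x q ≤ fun i => decide (∃ q', x q' i = true) :=
  fun i => Bool.le_iff_imp.2 fun h => decide_eq_true ⟨q, h⟩

lemma inf_le {ι : Type*} (x : ℕ → ι → Bool) (q : ℕ) :
    (fun i => decide (∀ q', x q' i = true)) ≤ x q :=
  fun i => Bool.le_iff_imp.2 fun h => (of_decide_eq_true h) q

lemma sup_attained {ι : Type*} [Finite ι] {x : ℕ → ι → Bool} (hx : Monotone x) :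
    ∃ Q, (fun i => decide (∃ q, x q i = true)) = x Q := by
  cases nonempty_fintype ι
  classical
  let D : ι → ℕ := fun i => if h : ∃ q, x q i = true then Nat.find h else 0
  refine ⟨Finset.univ.sup D, funext fun i => ?_⟩
  by_cases h : ∃ q, x q i = true
  · have h1 : x (Nat.find h) i = true := Nat.find_spec h
    have h2 : Nat.find h ≤ Finset.univ.sup D := by
      have h3 := Finset.le_sup (f := D) (Finset.mem_univ i)
      simpa only [D, dif_pos h] using h3
    have h3 : x (Nat.find h) i ≤ x (Finset.univ.sup D) i := (hx h2) i
    rw [h1] at h3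
    rw [decide_eq_true h]
    exact (Bool.le_iff_imp.1 h3 rfl).symm
  · have h4 : ∀ q, x q i = false := fun q => by
      cases hq : x q i
      · rfl
      · exact absurd ⟨q, hq⟩ h
    rw [decide_eq_false h]
    exact (h4 _).symm

lemma inf_attained {ι : Type*} [Finite ι] {x : ℕ → ι → Bool} (hx : Antitone x) :
    ∃ Q, (fun i => decide (∀ q, x q i = true)) = x Q := by
  cases nonempty_fintype ι
  classical
  let D : ι → ℕ := fun i => if h : ∃ q, ¬ (x q i = true) then Nat.find h else 0
  refine ⟨Finset.univ.sup D, funext fun i => ?_⟩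
  by_cases h : ∃ q, ¬ (x q i = true)
  · have h1 : ¬ (x (Nat.find h) i = true) := Nat.find_spec h
    have h2 : Nat.find h ≤ Finset.univ.sup D := by
      have h3 := Finset.le_sup (f := D) (Finset.mem_univ i)
      simpa only [D, dif_pos h] using h3
    have h3 : x (Finset.univ.sup D) i ≤ x (Nat.find h) i := (hx h2) i
    have h5 : x (Finset.univ.sup D) i = false := by
      cases hQ : x (Finset.univ.sup D) i
      · rfl
      · rw [hQ] at h3
        exact absurd (Bool.le_iff_imp.1 h3 rfl) h1
    rw [h5, decide_eq_false]
    intro hall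
    exact h1 (hall _)
  · push_neg at h
    rw [decide_eq_true h]
    exact (h _).symm

lemma finitary_incrCont (n : ℕ+) {g : (Idx (some n) → Bool) → Bool} (hg : Monotone g) :
    IncrCont ⟨some n, g⟩ := by
  refine ⟨hg, fun x hx => ?_⟩
  dsimp only
  obtain ⟨Q, hQ⟩ := sup_attained (ι := Idx (some n)) hx
  rw [hQ]
  cases hgQ : g (x Q)
  · symm; apply decide_eq_false; rintro ⟨q, hq⟩
    have hle : x q ≤ x Q := hQ ▸ le_sup x q
    have h6 := hg hle
    rw [hq, hgQ] at h6
    exact absurd h6 (by decide)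
  · symm; exact decide_eq_true ⟨Q, hgQ⟩

lemma finitary_decrCont (n : ℕ+) {g : (Idx (some n) → Bool) → Bool} (hg : Monotone g) :
    DecrCont ⟨some n, g⟩ := by
  refine ⟨hg, fun x hx => ?_⟩
  dsimp only
  obtain ⟨Q, hQ⟩ := inf_attained (ι := Idx (some n)) hx
  rw [hQ]
  cases hgQ : g (x Q)
  · symm; apply decide_eq_false
    intro hall
    have h7 := hall Q
    rw [hgQ] at h7
    exact Bool.noConfusion h7
  · symm; apply decide_eq_true
    intro q
    have hle : x Q ≤ x q := hQ ▸ inf_le x q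
    have h6 := hg hle
    rw [hgQ] at h6
    exact Bool.le_iff_imp.1 h6 rfl

lemma mono_comp {ι κ : Type*} {g : (ι → Bool) → Bool} {f : ι → (κ → Bool) → Bool}
    (hg : Monotone g) (hf : ∀ i, Monotone (f i)) :
    Monotone (fun x : κ → Bool => g fun i => f i x) :=
  fun _ _ hxy => hg fun i => hf i hxy

lemma borel_comp {ι κ : Type*} {g : (ι → Bool) → Bool} {f : ι → (κ → Bool) → Bool}
    (hg : MeasurableSet {y : ι → Bool | g y = true})
    (hf : ∀ i, MeasurableSet {x : κ → Bool | f i x = true}) :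
    MeasurableSet {x : κ → Bool | g (fun i => f i x) = true} :=
  pre_of_measurable ((measurable_of_pre hg).comp
    (measurable_pi_lambda _ fun i => measurable_of_pre (hf i)))

lemma incr_comp {ι κ : Type*} {g : (ι → Bool) → Bool} {f : ι → (κ → Bool) → Bool}
    (hg2 : ∀ x : ℕ → ι → Bool, Monotone x →
      g (fun i => decide (∃ q, x q i = true)) = decide (∃ q, g (x q) = true))
    (hf1 : ∀ i, Monotone (f i))
    (hf2 : ∀ i, ∀ x : ℕ → κ → Bool, Monotone x →
      f i (fun j => decide (∃ q, x q j = true)) = decide (∃ q, f i (x q) = true))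
    (x : ℕ → κ → Bool) (hx : Monotone x) :
    g (fun i => f i (fun j => decide (∃ q, x q j = true))) =
      decide (∃ q, g (fun i => f i (x q)) = true) := by
  have hinner : (fun i => f i (fun j => decide (∃ q, x q j = true))) =
      fun i => decide (∃ q, f i (x q) = true) := funext fun i => hf2 i x hx
  rw [hinner]
  exact hg2 (fun q i => f i (x q)) (fun _ _ h i => hf1 i (hx h))

lemma decr_comp {ι κ : Type*} {g : (ι → Bool) → Bool} {f : ι → (κ → Bool) → Bool}
    (hg2 : ∀ x : ℕ → ι → Bool, Antitone x →
      g (fun i => decide (∀ q, x q i = true)) = decide (∀ q, g (x q) = true))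
    (hf1 : ∀ i, Monotone (f i))
    (hf2 : ∀ i, ∀ x : ℕ → κ → Bool, Antitone x →
      f i (fun j => decide (∀ q, x q j = true)) = decide (∀ q, f i (x q) = true))
    (x : ℕ → κ → Bool) (hx : Antitone x) :
    g (fun i => f i (fun j => decide (∀ q, x q j = true))) =
      decide (∀ q, g (fun i => f i (x q)) = true) := by
  have hinner : (fun i => f i (fun j => decide (∀ q, x q j = true))) =
      fun i => decide (∀ q, f i (x q) = true) := funext fun i => hf2 i x hx
  rw [hinner]
  exact hg2 (fun q i => f i (x q)) (fun _ _ h i => hf1 i (hx h))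

lemma isOpen_agree {α : Type*} [TopologicalSpace α] [DiscreteTopology α] (N : ℕ) (x : ℕ → α) :
    IsOpen {y : ℕ → α | ∀ i, i < N → y i = x i} := by
  have he : {y : ℕ → α | ∀ i, i < N → y i = x i} =
      ⋂ i ∈ Finset.range N, (fun y : ℕ → α => y i) ⁻¹' {x i} := by
    ext y; simp [Finset.mem_range]
  rw [he]
  exact isOpen_biInter_finset fun i _ => (isOpen_discrete _).preimage (continuous_apply i)

lemma continuous_of_dep {h : (ℕ → Bool) → Bool} (N : ℕ)
    (hdep : ∀ x y : ℕ → Bool, (∀ i, i < N → x i = y i) → h x = h y) : Continuous h := by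
  rw [continuous_def]
  intro S _
  rw [isOpen_iff_forall_mem_open]
  intro x hx
  refine ⟨{y | ∀ i, i < N → y i = x i}, fun y hy => ?_, isOpen_agree N x, fun i _ => rfl⟩
  have := hdep y x (fun i hi => hy i hi)
  show h y ∈ S
  rw [this]; exact hx

lemma exists_dep_bound {f : (ℕ → Bool) → Bool} (hf : Continuous f) :
    ∃ N, ∀ x y : ℕ → Bool, (∀ i, i < N → x i = y i) → f x = f y := by
  let V : ℕ → Set (ℕ → Bool) := fun N => {x | ∀ y, (∀ i, i < N → y i = x i) → f y = f x}
  have hVo : ∀ N, IsOpen (V N) := by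
    intro N
    rw [isOpen_iff_forall_mem_open]
    intro x hx
    refine ⟨{y | ∀ i, i < N → y i = x i}, ?_, isOpen_agree N x, fun i _ => rfl⟩
    intro y hy z hz
    have h1 : f z = f x := hx z (fun i hi => (hz i hi).trans (hy i hi))
    have h2 : f y = f x := hx y hy
    rw [h1, h2]
  have hcov : (univ : Set (ℕ → Bool)) ⊆ ⋃ N, V N := by
    intro x _
    have ho : IsOpen (f ⁻¹' {f x}) := (isOpen_discrete _).preimage hf
    obtain ⟨N, hN⟩ := BC.cyl_of_isOpen ho (mem_preimage.2 rfl)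
    exact mem_iUnion.2 ⟨N, fun y hy => hN y hy⟩
  obtain ⟨t, ht⟩ := isCompact_univ.elim_finite_subcover V hVo hcov
  have hmono : ∀ {N M : ℕ}, N ≤ M → V N ⊆ V M :=
    fun h x hx y hy => hx y fun i hi => hy i (hi.trans_le h)
  rcases t.eq_empty_or_nonempty with rfl | hte
  · exfalso
    have := ht (mem_univ (fun _ => false))
    simpa using this
  · refine ⟨t.max' hte, fun x y hxy => ?_⟩
    have hx : x ∈ ⋃ N ∈ t, V N := ht (mem_univ x)
    obtain ⟨N, hNt, hxN⟩ := mem_iUnion₂.1 hx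
    exact (hmono (t.le_max' N hNt) hxN y (fun i hi => (hxy i hi).symm)).symm

end BC

namespace BC

open MeasureTheory Set

instance idxNonempty (a : Arity) : Nonempty (Idx a) := by
  cases a with
  | none => exact ⟨0⟩
  | some n => exact ⟨⟨0, n.pos⟩⟩

lemma mem_congr {F : Set BFun} {a : Arity} {g g' : (Idx a → Bool) → Bool}
    (h : ∀ x, g x = g' x) (hm : (⟨a, g⟩ : BFun) ∈ F) : (⟨a, g'⟩ : BFun) ∈ F := by
  rwa [show (⟨a, g⟩ : BFun) = ⟨a, g'⟩ from congrArg (Sigma.mk a) (funext h)] at hm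

section CloneF

variable {F : Set BFun}

lemma mem_of_finitary_mono (hfin : finRes F = {f | finitary f ∧ Monotone f.2})
    (n : ℕ+) {g : (Idx (some n) → Bool) → Bool} (hg : Monotone g) :
    (⟨some n, g⟩ : BFun) ∈ F := by
  have h : (⟨some n, g⟩ : BFun) ∈ finRes F := by
    rw [hfin]
    exact ⟨Option.some_ne_none n, hg⟩
  exact h.1

lemma const_mem (hF : IsClone F) (hfin : finRes F = {f | finitary f ∧ Monotone f.2})
    (a : Arity) (b : Bool) : (⟨a, fun _ => b⟩ : BFun) ∈ F := by
  have hg : (⟨some 1, fun _ : Idx (some 1) → Bool => b⟩ : BFun) ∈ F :=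
    mem_of_finitary_mono hfin 1 monotone_const
  exact hF.comp (some 1) a (fun _ => b)
    (fun _ => fun x => x (Classical.arbitrary (Idx a))) hg
    (fun _ => hF.proj a _)

lemma contMono_mem (hF : IsClone F) (hfin : finRes F = {f | finitary f ∧ Monotone f.2})
    {f : (ℕ → Bool) → Bool} (hc : Continuous f) (hm : Monotone f) :
    (⟨none, f⟩ : BFun) ∈ F := by
  obtain ⟨N, hN⟩ := exists_dep_bound hc
  let n : ℕ+ := ⟨N + 1, N.succ_pos⟩
  let e : (Idx (some n) → Bool) → (ℕ → Bool) :=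
    fun v i => if h : i < N + 1 then v ⟨i, h⟩ else false
  let g : (Idx (some n) → Bool) → Bool := fun v => f (e v)
  have hemono : Monotone e := fun v w hvw i => by
    dsimp only [e]
    split
    · exact hvw _
    · exact le_refl _
  have hgm : Monotone g := fun v w hvw => hm (hemono hvw)
  have hgF : (⟨some n, g⟩ : BFun) ∈ F := mem_of_finitary_mono hfin n hgm
  have hcomp := hF.comp (some n) none g (fun j => fun x => x (j : ℕ)) hgF
    (fun j => hF.proj none (j : ℕ))
  refine mem_congr (fun x => ?_) hcomp
  show f (e (fun j => x (j : ℕ))) = f x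
  apply hN
  intro i hi
  show (if h : i < N + 1 then x i else false) = x i
  rw [dif_pos (Nat.lt_succ_of_lt hi)]

lemma mono_of_mem (hF : IsClone F) (hfin : finRes F = {f | finitary f ∧ Monotone f.2})
    {f : BFun} (hf : f ∈ F) : Monotone f.2 := by
  obtain ⟨a, f2⟩ := f
  dsimp only
  by_contra hmono
  rw [Monotone] at hmono
  push_neg at hmono
  obtain ⟨x, y, hxy, hlt⟩ := hmono
  obtain ⟨hfy, hfx⟩ := Bool.lt_iff.1 hlt
  let c : Idx a → (Idx (some 1) → Bool) → Bool :=
    fun i v => x i || (y i && v ⟨0, one_pos⟩)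
  have hcm : ∀ i, Monotone (c i) := by
    intro i v w hvw
    dsimp only [c]
    cases hxi : x i
    · cases hyi : y i
      · simp
      · simpa using hvw _
    · simp
  have hcF : ∀ i, (⟨some 1, c i⟩ : BFun) ∈ F := fun i => mem_of_finitary_mono hfin 1 (hcm i)
  have hcomp := hF.comp a (some 1) f2 c hf hcF
  have hgmono : Monotone (fun v : Idx (some 1) → Bool => f2 fun i => c i v) := by
    have hmem : (⟨some 1, fun v => f2 fun i => c i v⟩ : BFun) ∈ finRes F :=
      ⟨hcomp, Option.some_ne_none 1⟩
    rw [hfin] at hmem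
    exact hmem.2
  have h0 : (fun _ : Idx (some 1) => false) ≤ (fun _ : Idx (some 1) => true) :=
    fun _ => Bool.false_le _
  have h2 := hgmono h0
  change f2 (fun i => c i fun _ => false) ≤ f2 (fun i => c i fun _ => true) at h2
  have e1 : (fun i => c i fun _ => false) = x := funext fun i => by
    dsimp only [c]; simp
  have e2 : (fun i => c i fun _ => true) = y := funext fun i => by
    dsimp only [c]
    cases hxi : x i
    · simp
    · have hyi : y i = true := Bool.le_iff_imp.1 (hxy i) hxi
      rw [hyi]; simp
  rw [e1, e2, hfx, hfy] at h2
  exact absurd h2 (by decide)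

lemma bigAnd_mem (hF : IsClone F) (hfin : finRes F = {f | finitary f ∧ Monotone f.2})
    {f2 : (ℕ → Bool) → Bool} (hmem : (⟨none, f2⟩ : BFun) ∈ F) (hmono : Monotone f2)
    {x : ℕ → ℕ → Bool} (hx : Monotone x)
    (htop : f2 (fun i => decide (∃ q, x q i = true)) = true)
    (hbot : ∀ q, f2 (x q) = false) : (⟨none, bigAnd⟩ : BFun) ∈ F := by
  let z : ℕ → (ℕ → Bool) → Bool :=
    fun i y => decide (∃ q, x q i = true ∧ ∀ j, j < q → y j = true)
  have hzF : ∀ i, (⟨none, z i⟩ : BFun) ∈ F := by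
    intro i
    by_cases hi : ∃ q, x q i = true
    · have hz : ∀ y, z i y = decide (∀ j, j < Nat.find hi → y j = true) := by
        intro y
        apply decide_eq_decide.2
        constructor
        · rintro ⟨q, hq1, hq2⟩
          intro j hj
          exact hq2 j (lt_of_lt_of_le hj (Nat.find_le hq1))
        · intro hall
          exact ⟨Nat.find hi, Nat.find_spec hi, fun j hj => hall j hj⟩
      rcases Nat.eq_zero_or_pos (Nat.find hi) with hm0 | hmpos
      · have hzt : ∀ y, z i y = true := fun y => by
          rw [hz y, hm0]
          exact decide_eq_true (fun j hj => absurd hj (Nat.not_lt_zero j))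
        exact mem_congr (fun y => (hzt y).symm) (const_mem hF hfin none true)
      · set nm : ℕ+ := ⟨Nat.find hi, hmpos⟩ with hnm
        have hgm : Monotone (fun v : Idx (some nm) → Bool =>
            decide (∀ j : Idx (some nm), v j = true)) := by
          intro v w hvw
          rw [Bool.le_iff_imp]
          intro hv
          exact decide_eq_true fun j => Bool.le_iff_imp.1 (hvw j) (of_decide_eq_true hv j)
        have hgF := mem_of_finitary_mono hfin nm hgm
        have hcomp := hF.comp (some nm) none _ (fun j => fun y => y (j : ℕ)) hgF
          (fun j => hF.proj none (j : ℕ))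
        refine mem_congr (fun y => ?_) hcomp
        show decide (∀ j : Fin (Nat.find hi), y (j : ℕ) = true) = z i y
        rw [hz y]
        apply decide_eq_decide.2
        constructor
        · intro hall j hj
          exact hall ⟨j, hj⟩
        · intro hall j
          exact hall j j.isLt
    · have hzf : ∀ y, z i y = false := fun y => by
        apply decide_eq_false
        rintro ⟨q, hq1, -⟩
        exact hi ⟨q, hq1⟩
      exact mem_congr (fun y => (hzf y).symm) (const_mem hF hfin none false)
  have hcomp := hF.comp none none f2 z hmem hzF
  refine mem_congr (fun y => ?_) hcomp
  show f2 (fun i => z i y) = decide (∀ i, y i = true)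
  by_cases hy : ∀ j, y j = true
  · have he : (fun i => z i y) = fun i => decide (∃ q, x q i = true) := funext fun i => by
      apply decide_eq_decide.2
      constructor
      · rintro ⟨q, h1, -⟩
        exact ⟨q, h1⟩
      · rintro ⟨q, h1⟩
        exact ⟨q, h1, fun j _ => hy j⟩
    rw [he, htop]
    exact (decide_eq_true hy).symm
  · have hym : ∃ j, ¬ (y j = true) := by push_neg at hy; obtain ⟨j, hj⟩ := hy; exact ⟨j, by simp [hj]⟩
    have he : (fun i => z i y) = x (Nat.find hym) := funext fun i => by
      cases hxm : x (Nat.find hym) i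
      · apply decide_eq_false
        rintro ⟨q, h1, h2⟩
        rcases le_or_gt q (Nat.find hym) with hqm | hqm
        · have hle : x q i ≤ x (Nat.find hym) i := hx hqm i
          rw [h1, hxm] at hle
          exact absurd hle (by decide)
        · exact (Nat.find_spec hym) (h2 _ hqm)
      · exact decide_eq_true ⟨Nat.find hym, hxm, fun j hj => of_not_not (Nat.find_min hym hj)⟩
    rw [he, hbot]
    symm
    apply decide_eq_false
    intro hall
    exact (Nat.find_spec hym) (hall (Nat.find hym))

lemma bigOr_mem (hF : IsClone F) (hfin : finRes F = {f | finitary f ∧ Monotone f.2})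
    {f2 : (ℕ → Bool) → Bool} (hmem : (⟨none, f2⟩ : BFun) ∈ F) (hmono : Monotone f2)
    {x : ℕ → ℕ → Bool} (hx : Antitone x)
    (hbot : f2 (fun i => decide (∀ q, x q i = true)) = false)
    (htop : ∀ q, f2 (x q) = true) : (⟨none, bigOr⟩ : BFun) ∈ F := by
  let z : ℕ → (ℕ → Bool) → Bool :=
    fun i y => decide (∀ q, x q i = true ∨ ∃ j, j < q ∧ y j = true)
  have hzF : ∀ i, (⟨none, z i⟩ : BFun) ∈ F := by
    intro i
    by_cases hi : ∃ q, ¬ (x q i = true)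
    · have hz : ∀ y, z i y = decide (∃ j, j < Nat.find hi ∧ y j = true) := by
        intro y
        apply decide_eq_decide.2
        constructor
        · intro hall
          rcases hall (Nat.find hi) with h1 | h2
          · exact absurd h1 (Nat.find_spec hi)
          · exact h2
        · rintro ⟨j, hj, hyj⟩ q
          rcases le_or_gt q j with hqj | hqj
          · exact Or.inl (of_not_not (Nat.find_min hi (lt_of_le_of_lt hqj hj)))
          · exact Or.inr ⟨j, hqj, hyj⟩
      rcases Nat.eq_zero_or_pos (Nat.find hi) with hm0 | hmpos
      · have hzf : ∀ y, z i y = false := fun y => by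
          rw [hz y, hm0]
          apply decide_eq_false
          rintro ⟨j, hj, -⟩
          exact absurd hj (Nat.not_lt_zero j)
        exact mem_congr (fun y => (hzf y).symm) (const_mem hF hfin none false)
      · set nm : ℕ+ := ⟨Nat.find hi, hmpos⟩ with hnm
        have hgm : Monotone (fun v : Idx (some nm) → Bool =>
            decide (∃ j : Idx (some nm), v j = true)) := by
          intro v w hvw
          rw [Bool.le_iff_imp]
          intro hv
          obtain ⟨j, hj⟩ := of_decide_eq_true hv
          exact decide_eq_true ⟨j, Bool.le_iff_imp.1 (hvw j) hj⟩
        have hgF := mem_of_finitary_mono hfin nm hgm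
        have hcomp := hF.comp (some nm) none _ (fun j => fun y => y (j : ℕ)) hgF
          (fun j => hF.proj none (j : ℕ))
        refine mem_congr (fun y => ?_) hcomp
        show decide (∃ j : Fin (Nat.find hi), y (j : ℕ) = true) = z i y
        rw [hz y]
        apply decide_eq_decide.2
        constructor
        · rintro ⟨j, hj⟩
          exact ⟨j, j.isLt, hj⟩
        · rintro ⟨j, hj, hyj⟩
          exact ⟨⟨j, hj⟩, hyj⟩
    · push_neg at hi
      have hzt : ∀ y, z i y = true := fun y =>
        decide_eq_true (fun q => Or.inl (hi q))
      exact mem_congr (fun y => (hzt y).symm) (const_mem hF hfin none true)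
  have hcomp := hF.comp none none f2 z hmem hzF
  refine mem_congr (fun y => ?_) hcomp
  show f2 (fun i => z i y) = decide (∃ i, y i = true)
  by_cases hy : ∃ j, y j = true
  · have he : (fun i => z i y) = x (Nat.find hy) := funext fun i => by
      cases hxm : x (Nat.find hy) i
      · apply decide_eq_false
        intro hall
        rcases hall (Nat.find hy) with h1 | ⟨j, hj, hyj⟩
        · rw [h1] at hxm; exact Bool.noConfusion hxm
        · exact (Nat.find_min hy hj) hyj
      · apply decide_eq_true
        intro q
        rcases le_or_gt q (Nat.find hy) with hqm | hqm
        · exact Or.inl (Bool.le_iff_imp.1 (hx hqm i) hxm)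
        · exact Or.inr ⟨Nat.find hy, hqm, Nat.find_spec hy⟩
    rw [he, htop]
    exact (decide_eq_true hy).symm
  · have he : (fun i => z i y) = fun i => decide (∀ q, x q i = true) := funext fun i => by
      apply decide_eq_decide.2
      constructor
      · intro hall q
        rcases hall q with h1 | ⟨j, _, hyj⟩
        · exact h1
        · exact absurd ⟨j, hyj⟩ hy
      · intro hall q
        exact Or.inl (hall q)
    rw [he, hbot]
    symm
    apply decide_eq_false
    exact hy

end CloneF
end BC

namespace BC

open MeasureTheory Set

lemma bigOr_isBorel : IsBorelFun ⟨none, bigOr⟩ := by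
  show MeasurableSet {x : ℕ → Bool | bigOr x = true}
  have he : {x : ℕ → Bool | bigOr x = true} = ⋃ i, {x : ℕ → Bool | x i = true} := by
    ext x; simp [bigOr]
  rw [he]
  exact MeasurableSet.iUnion fun i => pre_of_measurable (measurable_pi_apply i)

lemma bigAnd_isBorel : IsBorelFun ⟨none, bigAnd⟩ := by
  show MeasurableSet {x : ℕ → Bool | bigAnd x = true}
  have he : {x : ℕ → Bool | bigAnd x = true} = ⋂ i, {x : ℕ → Bool | x i = true} := by
    ext x; simp [bigAnd]
  rw [he]
  exact MeasurableSet.iInter fun i => pre_of_measurable (measurable_pi_apply i)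

lemma liminf_isBorel : IsBorelFun ⟨none, liminfF⟩ := by
  show MeasurableSet {x : ℕ → Bool | liminfF x = true}
  have he : {x : ℕ → Bool | liminfF x = true} =
      ⋃ N, ⋂ j, {x : ℕ → Bool | N ≤ j → x j = true} := by
    ext x; simp [liminfF]
  rw [he]
  refine MeasurableSet.iUnion fun N => MeasurableSet.iInter fun j => ?_
  by_cases h : N ≤ j
  · have h2 : {x : ℕ → Bool | N ≤ j → x j = true} = {x : ℕ → Bool | x j = true} := by
      ext x; simp [h]
    rw [h2]; exact pre_of_measurable (measurable_pi_apply j)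
  · have h2 : {x : ℕ → Bool | N ≤ j → x j = true} = univ := by
      ext x; simp [h]
    rw [h2]; exact MeasurableSet.univ

lemma bigOr_mono : Monotone bigOr := fun x y h => Bool.le_iff_imp.2 fun hx => by
  obtain ⟨i, hi⟩ := of_decide_eq_true hx
  exact decide_eq_true ⟨i, Bool.le_iff_imp.1 (h i) hi⟩

lemma bigAnd_mono : Monotone bigAnd := fun x y h => Bool.le_iff_imp.2 fun hx =>
  decide_eq_true fun i => Bool.le_iff_imp.1 (h i) (of_decide_eq_true hx i)

lemma liminf_mono : Monotone liminfF := fun x y h => Bool.le_iff_imp.2 fun hx => by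
  obtain ⟨N, hN⟩ := of_decide_eq_true hx
  exact decide_eq_true ⟨N, fun j hj => Bool.le_iff_imp.1 (h j) (hN j hj)⟩

lemma bigOr_incr : IncrCont ⟨none, bigOr⟩ := by
  refine ⟨bigOr_mono, fun x hx => ?_⟩
  show bigOr (fun i => decide (∃ q, x q i = true)) = decide (∃ q, bigOr (x q) = true)
  simp only [bigOr]
  apply decide_eq_decide.2
  simp only [decide_eq_true_eq]
  exact ⟨fun ⟨i, q, h⟩ => ⟨q, i, h⟩, fun ⟨q, i, h⟩ => ⟨i, q, h⟩⟩

lemma bigAnd_decr : DecrCont ⟨none, bigAnd⟩ := by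
  refine ⟨bigAnd_mono, fun x hx => ?_⟩
  show bigAnd (fun i => decide (∀ q, x q i = true)) = decide (∀ q, bigAnd (x q) = true)
  simp only [bigAnd]
  apply decide_eq_decide.2
  simp only [decide_eq_true_eq]
  exact ⟨fun h q i => h i q, fun h i q => h q i⟩

lemma bigOr_not_decr : ¬ DecrCont ⟨none, bigOr⟩ := by
  rintro ⟨-, h⟩
  have h' : bigOr (fun i => decide (∀ q, decide (q ≤ i) = true)) =
      decide (∀ q, bigOr (fun i => decide (q ≤ i)) = true) := by
    refine h (fun q i => decide (q ≤ i)) ?_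
    intro q q' hq i
    dsimp only
    rw [Bool.le_iff_imp]
    intro hi
    exact decide_eq_true (hq.trans (of_decide_eq_true hi))
  have hL : bigOr (fun i => decide (∀ q, decide (q ≤ i) = true)) = false := by
    simp only [bigOr]
    apply decide_eq_false
    rintro ⟨i, hi⟩
    have h2 := of_decide_eq_true hi (i + 1)
    exact absurd (of_decide_eq_true h2) (Nat.not_succ_le_self i)
  have hR : decide (∀ q, bigOr (fun i => decide (q ≤ i)) = true) = true := by
    apply decide_eq_true
    intro q
    simp only [bigOr]
    exact decide_eq_true ⟨q, decide_eq_true le_rfl⟩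
  rw [hL, hR] at h'
  exact Bool.noConfusion h'

lemma bigAnd_not_incr : ¬ IncrCont ⟨none, bigAnd⟩ := by
  rintro ⟨-, h⟩
  have h' : bigAnd (fun i => decide (∃ q, decide (i < q) = true)) =
      decide (∃ q, bigAnd (fun i => decide (i < q)) = true) := by
    refine h (fun q i => decide (i < q)) ?_
    intro q q' hq i
    dsimp only
    rw [Bool.le_iff_imp]
    intro hi
    exact decide_eq_true (lt_of_lt_of_le (of_decide_eq_true hi) hq)
  have hL : bigAnd (fun i => decide (∃ q, decide (i < q) = true)) = true := by
    simp only [bigAnd]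
    exact decide_eq_true fun i => decide_eq_true ⟨i + 1, decide_eq_true (Nat.lt_succ_self i)⟩
  have hR : decide (∃ q, bigAnd (fun i => decide (i < q)) = true) = false := by
    apply decide_eq_false
    rintro ⟨q, hq⟩
    simp only [bigAnd] at hq
    have h2 := of_decide_eq_true hq q
    exact absurd (of_decide_eq_true h2) (lt_irrefl q)
  rw [hL, hR] at h'
  exact Bool.noConfusion h'

lemma liminf_not_incr : ¬ IncrCont ⟨none, liminfF⟩ := by
  rintro ⟨-, h⟩
  have h' : liminfF (fun i => decide (∃ q, decide (i < q) = true)) =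
      decide (∃ q, liminfF (fun i => decide (i < q)) = true) := by
    refine h (fun q i => decide (i < q)) ?_
    intro q q' hq i
    dsimp only
    rw [Bool.le_iff_imp]
    intro hi
    exact decide_eq_true (lt_of_lt_of_le (of_decide_eq_true hi) hq)
  have hL : liminfF (fun i => decide (∃ q, decide (i < q) = true)) = true := by
    simp only [liminfF]
    exact decide_eq_true ⟨0, fun j _ => decide_eq_true ⟨j + 1, decide_eq_true (Nat.lt_succ_self j)⟩⟩
  have hR : decide (∃ q, liminfF (fun i => decide (i < q)) = true) = false := by
    apply decide_eq_false
    rintro ⟨q, hq⟩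
    simp only [liminfF] at hq
    obtain ⟨N, hN⟩ := of_decide_eq_true hq
    have h2 := of_decide_eq_true (hN (max N q) (le_max_left _ _))
    exact absurd h2 (not_lt.2 (le_max_right _ _))
  rw [hL, hR] at h'
  exact Bool.noConfusion h'

lemma liminf_not_decr : ¬ DecrCont ⟨none, liminfF⟩ := by
  rintro ⟨-, h⟩
  have h' : liminfF (fun i => decide (∀ q, decide (q ≤ i) = true)) =
      decide (∀ q, liminfF (fun i => decide (q ≤ i)) = true) := by
    refine h (fun q i => decide (q ≤ i)) ?_
    intro q q' hq i
    dsimp only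
    rw [Bool.le_iff_imp]
    intro hi
    exact decide_eq_true (hq.trans (of_decide_eq_true hi))
  have hL : liminfF (fun i => decide (∀ q, decide (q ≤ i) = true)) = false := by
    simp only [liminfF]
    apply decide_eq_false
    rintro ⟨N, hN⟩
    have h2 := of_decide_eq_true (hN N le_rfl) (N + 1)
    exact absurd (of_decide_eq_true h2) (Nat.not_succ_le_self N)
  have hR : decide (∀ q, liminfF (fun i => decide (q ≤ i)) = true) = true := by
    apply decide_eq_true
    intro q
    simp only [liminfF]
    exact decide_eq_true ⟨q, fun j hj => decide_eq_true hj⟩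
  rw [hL, hR] at h'
  exact Bool.noConfusion h'

lemma bigOr_not_cont : ¬ Continuous bigOr := by
  intro hc
  have ho : IsOpen (bigOr ⁻¹' {false}) := (isOpen_discrete ({false} : Set Bool)).preimage hc
  have hmem : (fun _ : ℕ => false) ∈ bigOr ⁻¹' {false} := by
    show bigOr (fun _ => false) ∈ ({false} : Set Bool)
    rw [mem_singleton_iff]
    exact decide_eq_false (by rintro ⟨i, hi⟩; exact Bool.noConfusion hi)
  obtain ⟨N, hN⟩ := cyl_of_isOpen ho hmem
  have hy := hN (fun i => decide (N ≤ i)) (fun i hi => decide_eq_false (not_le.2 hi))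
  have : bigOr (fun i => decide (N ≤ i)) = true := by
    simp only [bigOr]
    exact decide_eq_true ⟨N, decide_eq_true le_rfl⟩
  rw [mem_preimage, mem_singleton_iff, this] at hy
  exact Bool.noConfusion hy

lemma bigAnd_not_cont : ¬ Continuous bigAnd := by
  intro hc
  have ho : IsOpen (bigAnd ⁻¹' {true}) := (isOpen_discrete ({true} : Set Bool)).preimage hc
  have hmem : (fun _ : ℕ => true) ∈ bigAnd ⁻¹' {true} := by
    show bigAnd (fun _ => true) ∈ ({true} : Set Bool)
    rw [mem_singleton_iff]
    exact decide_eq_true fun _ => rfl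
  obtain ⟨N, hN⟩ := cyl_of_isOpen ho hmem
  have hy := hN (fun i => decide (i < N)) (fun i hi => decide_eq_true hi)
  have hv : bigAnd (fun i => decide (i < N)) = false := by
    simp only [bigAnd]
    apply decide_eq_false
    intro hall
    exact absurd (of_decide_eq_true (hall N)) (lt_irrefl N)
  rw [mem_preimage, mem_singleton_iff, hv] at hy
  exact Bool.noConfusion hy

lemma liminf_not_cont : ¬ Continuous liminfF := by
  intro hc
  have ho : IsOpen (liminfF ⁻¹' {true}) := (isOpen_discrete ({true} : Set Bool)).preimage hc
  have hmem : (fun _ : ℕ => true) ∈ liminfF ⁻¹' {true} := by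
    show liminfF (fun _ => true) ∈ ({true} : Set Bool)
    rw [mem_singleton_iff]
    exact decide_eq_true ⟨0, fun _ _ => rfl⟩
  obtain ⟨N, hN⟩ := cyl_of_isOpen ho hmem
  have hy := hN (fun i => decide (i < N)) (fun i hi => decide_eq_true hi)
  have hv : liminfF (fun i => decide (i < N)) = false := by
    simp only [liminfF]
    apply decide_eq_false
    rintro ⟨M, hM⟩
    have h2 := of_decide_eq_true (hM (max M N) (le_max_left _ _))
    exact absurd h2 (not_lt.2 (le_max_right _ _))
  rw [mem_preimage, mem_singleton_iff, hv] at hy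
  exact Bool.noConfusion hy

lemma cut0_monotone (x : ℕ → Bool) :
    Monotone (fun q => fun i => if i < q then x i else false) := by
  intro q q' hq i
  dsimp only
  by_cases h1 : i < q
  · rw [if_pos h1, if_pos (h1.trans_le hq)]
  · rw [if_neg h1]
    exact Bool.false_le _

lemma sup_cut0 (x : ℕ → Bool) :
    (fun i => decide (∃ q, (if i < q then x i else false) = true)) = x := funext fun i => by
  cases hxi : x i
  · apply decide_eq_false
    rintro ⟨q, hq⟩
    revert hq
    split <;> exact fun h => Bool.noConfusion h
  · exact decide_eq_true ⟨i + 1, by rw [if_pos (Nat.lt_succ_self i)]⟩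

lemma cut1_antitone (x : ℕ → Bool) :
    Antitone (fun q => fun i => if i < q then x i else true) := by
  intro q q' hq i
  dsimp only
  by_cases h1 : i < q
  · rw [if_pos h1, if_pos (h1.trans_le hq)]
  · rw [if_neg h1]
    exact Bool.le_true _

lemma inf_cut1 (x : ℕ → Bool) :
    (fun i => decide (∀ q, (if i < q then x i else true) = true)) = x := funext fun i => by
  cases hxi : x i
  · apply decide_eq_false
    intro hall
    have h2 := hall (i + 1)
    rw [if_pos (Nat.lt_succ_self i)] at h2
    exact Bool.noConfusion h2
  · apply decide_eq_true
    intro q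
    by_cases h1 : i < q
    · rw [if_pos h1]
    · rw [if_neg h1]

lemma isOpen_true_of_incr {f2 : (ℕ → Bool) → Bool} (hi : IncrCont ⟨none, f2⟩) :
    IsOpen {x : ℕ → Bool | f2 x = true} := by
  rw [isOpen_iff_forall_mem_open]
  intro x hx
  have h' : f2 (fun i => decide (∃ q, (if i < q then x i else false) = true)) =
      decide (∃ q, f2 (fun i => if i < q then x i else false) = true) :=
    hi.2 (fun q i => if i < q then x i else false) (cut0_monotone x)
  rw [sup_cut0 x] at h'
  rw [mem_setOf_eq] at hx
  rw [hx] at h'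
  obtain ⟨q, hq⟩ := of_decide_eq_true h'.symm
  refine ⟨{y | ∀ i, i < q → y i = x i}, ?_, isOpen_agree q x, fun i _ => rfl⟩
  intro y hy
  have hle : (fun i => if i < q then x i else false) ≤ y := by
    intro i
    dsimp only
    by_cases h1 : i < q
    · rw [if_pos h1, ← hy i h1]
    · rw [if_neg h1]
      exact Bool.false_le _
  exact Bool.le_iff_imp.1 (hi.1 hle) hq

lemma isOpen_false_of_decr {f2 : (ℕ → Bool) → Bool} (hd : DecrCont ⟨none, f2⟩) :
    IsOpen {x : ℕ → Bool | f2 x = false} := by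
  rw [isOpen_iff_forall_mem_open]
  intro x hx
  have h' : f2 (fun i => decide (∀ q, (if i < q then x i else true) = true)) =
      decide (∀ q, f2 (fun i => if i < q then x i else true) = true) :=
    hd.2 (fun q i => if i < q then x i else true) (cut1_antitone x)
  rw [inf_cut1 x] at h'
  rw [mem_setOf_eq] at hx
  rw [hx] at h'
  have hne := of_decide_eq_false h'.symm
  push_neg at hne
  obtain ⟨q, hq⟩ := hne
  refine ⟨{y | ∀ i, i < q → y i = x i}, ?_, isOpen_agree q x, fun i _ => rfl⟩
  intro y hy
  have hle : y ≤ (fun i => if i < q then x i else true) := by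
    intro i
    dsimp only
    by_cases h1 : i < q
    · rw [if_pos h1, hy i h1]
    · rw [if_neg h1]
      exact Bool.le_true _
  show f2 y = false
  cases hfy : f2 y
  · rfl
  · exfalso
    apply hq
    have h3 : f2 y ≤ f2 fun i => if i < q then x i else true := hd.1 hle
    rw [hfy] at h3
    exact Bool.le_iff_imp.1 h3 rfl

lemma cont_of_open_open {f2 : (ℕ → Bool) → Bool} (h1 : IsOpen {x : ℕ → Bool | f2 x = true})
    (h2 : IsOpen {x : ℕ → Bool | f2 x = false}) : Continuous f2 := by
  rw [continuous_def]
  intro S _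
  have he : f2 ⁻¹' S = (if true ∈ S then {x | f2 x = true} else ∅) ∪
      (if false ∈ S then {x | f2 x = false} else ∅) := by
    ext x
    cases hx : f2 x <;> by_cases ht : true ∈ S <;> by_cases hf : false ∈ S <;>
      simp [hx, ht, hf]
  rw [he]
  apply IsOpen.union <;> split <;> first | assumption | exact isOpen_empty

end BC

namespace BC

open MeasureTheory Set

lemma cont_isBorel {f : BFun} (hc : IsContFun f) : IsBorelFun f := by
  obtain ⟨a, f2⟩ := f
  cases a with
  | none => exact pre_of_measurable (hc.measurable)
  | some n => exact finitary_isBorel n f2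

lemma isClone_M1 : IsClone M1 := by
  constructor
  · intro a i
    exact ⟨pre_of_measurable (measurable_pi_apply i), fun x y h => h i⟩
  · rintro a b g f ⟨hgB, hgM⟩ hfm
    refine ⟨?_, ?_⟩
    · show MeasurableSet {x : Idx b → Bool | g (fun i => f i x) = true}
      exact borel_comp hgB fun i => (hfm i).1
    · show Monotone (fun x : Idx b → Bool => g fun i => f i x)
      exact mono_comp hgM fun i => (hfm i).2

lemma isClone_M2 : IsClone M2 := by
  constructor
  · intro a i
    exact ⟨pre_of_measurable (measurable_pi_apply i), fun x y h => h i, fun x hx => rfl⟩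
  · rintro a b g f ⟨hgB, hgM, hgI⟩ hfm
    refine ⟨?_, ?_, ?_⟩
    · show MeasurableSet {x : Idx b → Bool | g (fun i => f i x) = true}
      exact borel_comp hgB fun i => (hfm i).1
    · show Monotone (fun x : Idx b → Bool => g fun i => f i x)
      exact mono_comp hgM fun i => (hfm i).2.1
    · intro x hx
      exact incr_comp hgI (fun i => (hfm i).2.1) (fun i => (hfm i).2.2) x hx

lemma isClone_M3 : IsClone M3 := by
  constructor
  · intro a i
    exact ⟨pre_of_measurable (measurable_pi_apply i), fun x y h => h i, fun x hx => rfl⟩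
  · rintro a b g f ⟨hgB, hgM, hgI⟩ hfm
    refine ⟨?_, ?_, ?_⟩
    · show MeasurableSet {x : Idx b → Bool | g (fun i => f i x) = true}
      exact borel_comp hgB fun i => (hfm i).1
    · show Monotone (fun x : Idx b → Bool => g fun i => f i x)
      exact mono_comp hgM fun i => (hfm i).2.1
    · intro x hx
      exact decr_comp hgI (fun i => (hfm i).2.1) (fun i => (hfm i).2.2) x hx

lemma isClone_M4 : IsClone M4 := by
  constructor
  · intro a i
    exact ⟨continuous_apply i, fun x y h => h i⟩
  · rintro a b g f ⟨hgC, hgM⟩ hfm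
    refine ⟨?_, ?_⟩
    · show Continuous (fun x : Idx b → Bool => g fun i => f i x)
      exact hgC.comp (continuous_pi fun i => (hfm i).1)
    · show Monotone (fun x : Idx b → Bool => g fun i => f i x)
      exact mono_comp hgM fun i => (hfm i).2

lemma finRes_eq_of (M : Set BFun) (h1 : ∀ f ∈ M, Monotone f.2)
    (h2 : ∀ (n : ℕ+) (g : (Idx (some n) → Bool) → Bool), Monotone g → (⟨some n, g⟩ : BFun) ∈ M) :
    finRes M = {f | finitary f ∧ Monotone f.2} := by
  ext ⟨a, f2⟩
  constructor
  · rintro ⟨hm, hfin⟩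
    exact ⟨hfin, h1 _ hm⟩
  · rintro ⟨hfin, hmono⟩
    cases a with
    | none => exact absurd rfl hfin
    | some n => exact ⟨h2 n f2 hmono, Option.some_ne_none n⟩

lemma finRes_M1 : finRes M1 = {f | finitary f ∧ Monotone f.2} :=
  finRes_eq_of M1 (fun _ hf => hf.2) (fun n g hg => ⟨finitary_isBorel n g, hg⟩)

lemma finRes_M2 : finRes M2 = {f | finitary f ∧ Monotone f.2} :=
  finRes_eq_of M2 (fun _ hf => hf.2.1)
    (fun n g hg => ⟨finitary_isBorel n g, finitary_incrCont n hg⟩)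

lemma finRes_M3 : finRes M3 = {f | finitary f ∧ Monotone f.2} :=
  finRes_eq_of M3 (fun _ hf => hf.2.1)
    (fun n g hg => ⟨finitary_isBorel n g, finitary_decrCont n hg⟩)

lemma finRes_M4 : finRes M4 = {f | finitary f ∧ Monotone f.2} :=
  finRes_eq_of M4 (fun _ hf => hf.2) (fun n g hg => ⟨finitary_isCont n g, hg⟩)

section Classify

variable {F : Set BFun}

lemma bigAnd_mem_of_not_incr (hF : IsClone F)
    (hfin : finRes F = {f | finitary f ∧ Monotone f.2})
    (h : ∃ f ∈ F, ¬ IncrCont f) : (⟨none, bigAnd⟩ : BFun) ∈ F := by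
  obtain ⟨⟨a, f2⟩, hfF, hni⟩ := h
  have hm : Monotone f2 := mono_of_mem hF hfin hfF
  cases a with
  | some n => exact absurd (finitary_incrCont n hm) hni
  | none =>
    rw [IncrCont] at hni
    dsimp only at hni
    push_neg at hni
    obtain ⟨x, hx, hne⟩ := hni hm
    have hbot : ∀ q, f2 (x q) = false := by
      intro q
      cases hq : f2 (x q)
      · rfl
      · exfalso
        have hd : decide (∃ q, f2 (x q) = true) = true := decide_eq_true ⟨q, hq⟩
        have hle : f2 (x q) ≤ f2 (fun i => decide (∃ q', x q' i = true)) := hm (le_sup x q)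
        rw [hq] at hle
        exact hne ((Bool.le_iff_imp.1 hle rfl).trans hd.symm)
    have htop : f2 (fun i => decide (∃ q, x q i = true)) = true := by
      cases hval : f2 (fun i => decide (∃ q, x q i = true))
      · exfalso
        apply hne
        rw [hval]
        symm
        apply decide_eq_false
        rintro ⟨q, hq⟩
        rw [hbot q] at hq
        exact Bool.noConfusion hq
      · rfl
    exact bigAnd_mem hF hfin hfF hm hx htop hbot

lemma bigOr_mem_of_not_decr (hF : IsClone F)
    (hfin : finRes F = {f | finitary f ∧ Monotone f.2})
    (h : ∃ f ∈ F, ¬ DecrCont f) : (⟨none, bigOr⟩ : BFun) ∈ F := by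
  obtain ⟨⟨a, f2⟩, hfF, hni⟩ := h
  have hm : Monotone f2 := mono_of_mem hF hfin hfF
  cases a with
  | some n => exact absurd (finitary_decrCont n hm) hni
  | none =>
    rw [DecrCont] at hni
    dsimp only at hni
    push_neg at hni
    obtain ⟨x, hx, hne⟩ := hni hm
    have htop : ∀ q, f2 (x q) = true := by
      intro q
      cases hq : f2 (x q)
      · exfalso
        have hd : decide (∀ q, f2 (x q) = true) = false := by
          apply decide_eq_false
          intro hall
          rw [hall q] at hq
          exact Bool.noConfusion hq
        have hle : f2 (fun i => decide (∀ q', x q' i = true)) ≤ f2 (x q) := hm (inf_le x q)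
        rw [hq] at hle
        apply hne
        rw [hd]
        cases hv : f2 (fun i => decide (∀ q', x q' i = true))
        · rfl
        · rw [hv] at hle
          exact absurd hle (by decide)
      · rfl
    have hbot : f2 (fun i => decide (∀ q, x q i = true)) = false := by
      cases hval : f2 (fun i => decide (∀ q, x q i = true))
      · rfl
      · exfalso
        apply hne
        rw [hval]
        symm
        exact decide_eq_true htop
    exact bigOr_mem hF hfin hfF hm hx hbot htop

lemma M4_subset (hF : IsClone F) (hfin : finRes F = {f | finitary f ∧ Monotone f.2}) :
    M4 ⊆ F := by
  rintro ⟨a, f2⟩ ⟨hc, hm⟩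
  cases a with
  | some n => exact mem_of_finitary_mono hfin n hm
  | none => exact contMono_mem hF hfin hc hm

lemma mem_M4_of {f : BFun} (hI : IncrCont f) (hD : DecrCont f) : f ∈ M4 := by
  obtain ⟨a, f2⟩ := f
  refine ⟨?_, hI.1⟩
  cases a with
  | some n => exact finitary_isCont n f2
  | none =>
    exact cont_of_open_open (isOpen_true_of_incr hI) (isOpen_false_of_decr hD)

lemma M3_subset (hF : IsClone F) (hfin : finRes F = {f | finitary f ∧ Monotone f.2})
    (hAnd : (⟨none, bigAnd⟩ : BFun) ∈ F) : M3 ⊆ F := by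
  rintro ⟨a, f2⟩ ⟨hB, hD⟩
  cases a with
  | some n => exact mem_of_finitary_mono hfin n hD.1
  | none =>
    have hDm : Monotone f2 := hD.1
    have hcut : ∀ q : ℕ,
        (⟨none, fun x : ℕ → Bool => f2 (fun i => if i < q then x i else true)⟩ : BFun) ∈ F := by
      intro q
      apply contMono_mem hF hfin
      · apply continuous_of_dep q
        intro x y hxy
        congr 1
        funext i
        by_cases h1 : i < q
        · rw [if_pos h1, if_pos h1, hxy i h1]
        · rw [if_neg h1, if_neg h1]
      · intro x y hxy
        apply hDm
        intro i
        dsimp only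
        by_cases h1 : i < q
        · rw [if_pos h1, if_pos h1]; exact hxy i
        · rw [if_neg h1, if_neg h1]
    have hcomp := hF.comp none none bigAnd
      (fun q => fun x : ℕ → Bool => f2 (fun i => if i < q then x i else true)) hAnd hcut
    refine mem_congr (fun x => ?_) hcomp
    show bigAnd (fun q => f2 fun i => if i < q then x i else true) = f2 x
    have h' : f2 (fun i => decide (∀ q, (if i < q then x i else true) = true)) =
        decide (∀ q, f2 (fun i => if i < q then x i else true) = true) :=
      hD.2 (fun q i => if i < q then x i else true) (cut1_antitone x)
    rw [inf_cut1 x] at h'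
    exact h'.symm

lemma M2_subset (hF : IsClone F) (hfin : finRes F = {f | finitary f ∧ Monotone f.2})
    (hOr : (⟨none, bigOr⟩ : BFun) ∈ F) : M2 ⊆ F := by
  rintro ⟨a, f2⟩ ⟨hB, hI⟩
  cases a with
  | some n => exact mem_of_finitary_mono hfin n hI.1
  | none =>
    have hIm : Monotone f2 := hI.1
    have hcut : ∀ q : ℕ,
        (⟨none, fun x : ℕ → Bool => f2 (fun i => if i < q then x i else false)⟩ : BFun) ∈ F := by
      intro q
      apply contMono_mem hF hfin
      · apply continuous_of_dep q
        intro x y hxy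
        congr 1
        funext i
        by_cases h1 : i < q
        · rw [if_pos h1, if_pos h1, hxy i h1]
        · rw [if_neg h1, if_neg h1]
      · intro x y hxy
        apply hIm
        intro i
        dsimp only
        by_cases h1 : i < q
        · rw [if_pos h1, if_pos h1]; exact hxy i
        · rw [if_neg h1, if_neg h1]
    have hcomp := hF.comp none none bigOr
      (fun q => fun x : ℕ → Bool => f2 (fun i => if i < q then x i else false)) hOr hcut
    refine mem_congr (fun x => ?_) hcomp
    show bigOr (fun q => f2 fun i => if i < q then x i else false) = f2 x
    have h' : f2 (fun i => decide (∃ q, (if i < q then x i else false) = true)) =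
        decide (∃ q, f2 (fun i => if i < q then x i else false) = true) :=
      hI.2 (fun q i => if i < q then x i else false) (cut0_monotone x)
    rw [sup_cut0 x] at h'
    exact h'.symm

lemma M1_subset (hF : IsClone F) (hfin : finRes F = {f | finitary f ∧ Monotone f.2})
    (hOr : (⟨none, bigOr⟩ : BFun) ∈ F) (hAnd : (⟨none, bigAnd⟩ : BFun) ∈ F) : M1 ⊆ F := by
  rintro ⟨a, f2⟩ ⟨hB, hm⟩
  cases a with
  | some n => exact mem_of_finitary_mono hfin n hm
  | none =>
    let P : Set (Set (ℕ → Bool)) := {A | (⟨none, fun x => decide (x ∈ A)⟩ : BFun) ∈ F}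
    have hcl : ∀ A : Set (ℕ → Bool), IsClopen A → BC.UpClosed A → A ∈ P := by
      intro A hA hup
      apply contMono_mem hF hfin
      · apply cont_of_open_open
        · have he : {x : ℕ → Bool | decide (x ∈ A) = true} = A := by ext x; simp
          rw [he]; exact hA.2
        · have he : {x : ℕ → Bool | decide (x ∈ A) = false} = Aᶜ := by ext x; simp
          rw [he]; exact hA.1.isOpen_compl
      · intro x y hxy
        rw [Bool.le_iff_imp]
        intro hx
        exact decide_eq_true (hup hxy (of_decide_eq_true hx))
    have hU : ∀ A : ℕ → Set (ℕ → Bool), (∀ n, A n ∈ P) → (⋃ n, A n) ∈ P := by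
      intro A hA
      have hcomp := hF.comp none none bigOr (fun n => fun x => decide (x ∈ A n)) hOr hA
      refine mem_congr (fun x => ?_) hcomp
      show decide (∃ n, decide (x ∈ A n) = true) = decide (x ∈ ⋃ n, A n)
      apply decide_eq_decide.2
      simp [mem_iUnion]
    have hI : ∀ A : ℕ → Set (ℕ → Bool), (∀ n, A n ∈ P) → (⋂ n, A n) ∈ P := by
      intro A hA
      have hcomp := hF.comp none none bigAnd (fun n => fun x => decide (x ∈ A n)) hAnd hA
      refine mem_congr (fun x => ?_) hcomp
      show decide (∀ n, decide (x ∈ A n) = true) = decide (x ∈ ⋂ n, A n)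
      apply decide_eq_decide.2
      simp [mem_iInter]
    have hBm : MeasurableSet {x : ℕ → Bool | f2 x = true} := hB
    have hBP : {x : ℕ → Bool | f2 x = true} ∈ P :=
      BCDyck.dyck hcl hU hI hBm (fun x y hxy hx => Bool.le_iff_imp.1 (hm hxy) hx)
    refine mem_congr (fun x => ?_) hBP
    by_cases hx : f2 x = true
    · rw [hx]
      exact @decide_eq_true (x ∈ {x : ℕ → Bool | f2 x = true}) (Classical.propDecidable _) hx
    · rw [Bool.not_eq_true] at hx
      rw [hx]
      refine @decide_eq_false (x ∈ {x : ℕ → Bool | f2 x = true}) (Classical.propDecidable _)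
        fun hmem => ?_
      have h9 : f2 x = true := hmem
      rw [hx] at h9
      exact Bool.noConfusion h9

end Classify
end BC

end BCaux

/-- There are exactly four Borel clones whose finitary restriction is the set of all
finitary monotone Boolean functions: (i) all monotone Borel functions; (ii) all
increasing-continuous Borel functions; (iii) all decreasing-continuous Borel functions;
(iv) all continuous monotone functions. -/
theorem borel_clones_over_Mono :
    (∀ C ∈ [M1, M2, M3, M4], IsClone C ∧ C ⊆ BorelClass ∧
      finRes C = {f | finitary f ∧ Monotone f.2}) ∧
    List.Pairwise (· ≠ ·) [M1, M2, M3, M4] ∧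
    (∀ F : Set BFun, IsClone F → F ⊆ BorelClass →
      finRes F = {f | finitary f ∧ Monotone f.2} →
      F = M1 ∨ F = M2 ∨ F = M3 ∨ F = M4) := by
  classical
  have hOrM2 : (⟨none, bigOr⟩ : BFun) ∈ M2 := ⟨BC.bigOr_isBorel, BC.bigOr_incr⟩
  have hAndM3 : (⟨none, bigAnd⟩ : BFun) ∈ M3 := ⟨BC.bigAnd_isBorel, BC.bigAnd_decr⟩
  have hLimM1 : (⟨none, liminfF⟩ : BFun) ∈ M1 := ⟨BC.liminf_isBorel, BC.liminf_mono⟩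
  have hLimM2 : (⟨none, liminfF⟩ : BFun) ∉ M2 := fun h => BC.liminf_not_incr h.2
  have hLimM3 : (⟨none, liminfF⟩ : BFun) ∉ M3 := fun h => BC.liminf_not_decr h.2
  have hLimM4 : (⟨none, liminfF⟩ : BFun) ∉ M4 := fun h => BC.liminf_not_cont h.1
  have hOrM3 : (⟨none, bigOr⟩ : BFun) ∉ M3 := fun h => BC.bigOr_not_decr h.2
  have hOrM4 : (⟨none, bigOr⟩ : BFun) ∉ M4 := fun h => BC.bigOr_not_cont h.1
  have hAndM4 : (⟨none, bigAnd⟩ : BFun) ∉ M4 := fun h => BC.bigAnd_not_cont h.1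
  have h12 : M1 ≠ M2 := fun h => hLimM2 (h ▸ hLimM1)
  have h13 : M1 ≠ M3 := fun h => hLimM3 (h ▸ hLimM1)
  have h14 : M1 ≠ M4 := fun h => hLimM4 (h ▸ hLimM1)
  have h23 : M2 ≠ M3 := fun h => hOrM3 (h ▸ hOrM2)
  have h24 : M2 ≠ M4 := fun h => hOrM4 (h ▸ hOrM2)
  have h34 : M3 ≠ M4 := fun h => hAndM4 (h ▸ hAndM3)
  refine ⟨?_, ?_, ?_⟩
  · intro C hC
    simp only [List.mem_cons, List.not_mem_nil, or_false] at hC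
    rcases hC with rfl | rfl | rfl | rfl
    · exact ⟨BC.isClone_M1, fun f hf => hf.1, BC.finRes_M1⟩
    · exact ⟨BC.isClone_M2, fun f hf => hf.1, BC.finRes_M2⟩
    · exact ⟨BC.isClone_M3, fun f hf => hf.1, BC.finRes_M3⟩
    · exact ⟨BC.isClone_M4, fun f hf => BC.cont_isBorel hf.1, BC.finRes_M4⟩
  · refine List.Pairwise.cons ?_ (List.Pairwise.cons ?_ (List.Pairwise.cons ?_
      (List.Pairwise.cons (fun b hb => absurd hb List.not_mem_nil) List.Pairwise.nil)))
    · intro b hb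
      simp only [List.mem_cons, List.not_mem_nil, or_false] at hb
      rcases hb with rfl | rfl | rfl
      exacts [h12, h13, h14]
    · intro b hb
      simp only [List.mem_cons, List.not_mem_nil, or_false] at hb
      rcases hb with rfl | rfl
      exacts [h23, h24]
    · intro b hb
      simp only [List.mem_cons, List.not_mem_nil, or_false] at hb
      rcases hb with rfl
      exact h34
  · intro F hFc hFB hFfin
    have hBor : ∀ f ∈ F, IsBorelFun f := fun f hf => hFB hf
    by_cases hP : ∃ f ∈ F, ¬ IncrCont f
    · by_cases hQ : ∃ f ∈ F, ¬ DecrCont f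
      · left
        have hAnd := BC.bigAnd_mem_of_not_incr hFc hFfin hP
        have hOr := BC.bigOr_mem_of_not_decr hFc hFfin hQ
        exact Set.Subset.antisymm
          (fun f hf => ⟨hBor f hf, BC.mono_of_mem hFc hFfin hf⟩)
          (BC.M1_subset hFc hFfin hOr hAnd)
      · right; right; left
        push_neg at hQ
        have hAnd := BC.bigAnd_mem_of_not_incr hFc hFfin hP
        exact Set.Subset.antisymm
          (fun f hf => ⟨hBor f hf, hQ f hf⟩)
          (BC.M3_subset hFc hFfin hAnd)
    · by_cases hQ : ∃ f ∈ F, ¬ DecrCont f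
      · right; left
        push_neg at hP
        have hOr := BC.bigOr_mem_of_not_decr hFc hFfin hQ
        exact Set.Subset.antisymm
          (fun f hf => ⟨hBor f hf, hP f hf⟩)
          (BC.M2_subset hFc hFfin hOr)
      · right; right; right
        push_neg at hP hQ
        exact Set.Subset.antisymm
          (fun f hf => BC.mem_M4_of (hP f hf) (hQ f hf))
          (BC.M4_subset hFc hFfin)
end

section
/- There are exactly six Borel clones whose finitary restriction is the set of all finitary monotone Boolean functions f with f(0⃗) = 0, namely the sets of all Borel f (arities 1 ≤ n ≤ ω) satisfying respectively: (i) monotone with f(0⃗) = 0; (ii) increasing-continuous with f(0⃗) = 0; (iii) monotone and vanishing on a neighborhood of 0⃗; (iv) increasing-continuous and vanishing on a neighborhood of 0⃗; (v) decreasing-continuous with f(0⃗) = 0 (every such f automatically vanishes on a neighborhood of 0⃗); (vi) continuous and monotone with f(0⃗) = 0. -/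
open scoped Classical

def N1 : Set BFun := {f | IsBorelFun f ∧ Monotone f.2 ∧ PresBot f}
def N2 : Set BFun := {f | IsBorelFun f ∧ IncrCont f ∧ PresBot f}
def N3 : Set BFun := {f | IsBorelFun f ∧ Monotone f.2 ∧ VanishNearBot f}
def N4 : Set BFun := {f | IsBorelFun f ∧ IncrCont f ∧ VanishNearBot f}
def N5 : Set BFun := {f | IsBorelFun f ∧ DecrCont f ∧ PresBot f}
def N6 : Set BFun := {f | IsContFun f ∧ Monotone f.2 ∧ PresBot f}

namespace BCaux
open Set

/-! ### Bool / order helpers -/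

lemma ble {x y : Bool} : x ≤ y ↔ (x = true → y = true) := Bool.le_iff_imp

lemma bool_eq_false {x : Bool} (h : ¬ x = true) : x = false := by
  cases x <;> simp_all

/-! ### Neighborhood basis in products of `Bool` -/

lemma exists_finset_nbhd {ι : Type*} {x : ι → Bool} {U : Set (ι → Bool)} (hU : U ∈ nhds x) :
    ∃ S : Finset ι, {y | ∀ i ∈ S, y i = x i} ⊆ U := by
  rw [nhds_pi, Filter.mem_pi] at hU
  obtain ⟨I, Ifin, t, ht, hsub⟩ := hU
  refine ⟨Ifin.toFinset, fun y hy => hsub fun i hi => ?_⟩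
  have : y i = x i := hy i (Ifin.mem_toFinset.2 hi)
  rw [this]; exact mem_of_mem_nhds (ht i)

lemma isOpen_agree {ι : Type*} (x : ι → Bool) (S : Finset ι) :
    IsOpen {y : ι → Bool | ∀ i ∈ S, y i = x i} := by
  have : {y : ι → Bool | ∀ i ∈ S, y i = x i} = ⋂ i ∈ (S : Set ι), {y | y i = x i} := by
    ext y; simp
  rw [this]
  refine (S.finite_toSet).isOpen_biInter fun i _ => ?_
  have h2 : {y : ι → Bool | y i = x i} = (fun y : ι → Bool => y i) ⁻¹' {b | b = x i} := rfl
  rw [h2]; exact (isOpen_discrete _).preimage (continuous_apply i)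

/-! ### Vanishing near bot, finitary version -/

/-- `f` is `false` whenever all coordinates in `S` are `false`. -/
def VanB {ι : Type*} (f : (ι → Bool) → Bool) (S : Finset ι) : Prop :=
  ∀ x, (∀ i ∈ S, x i = false) → f x = false

lemma vanish_iff {ι : Type*} (f : (ι → Bool) → Bool) :
    ((fun _ => false) ∉ closure {x | f x = true}) ↔ ∃ S, VanB f S := by
  constructor
  · intro h
    have hU : (closure {x | f x = true})ᶜ ∈ nhds (fun _ => false : ι → Bool) :=
      (isClosed_closure.isOpen_compl).mem_nhds h
    obtain ⟨S, hS⟩ := exists_finset_nbhd hU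
    refine ⟨S, fun x hx => ?_⟩
    have : x ∈ (closure {x | f x = true})ᶜ := hS (by simpa using hx)
    have : x ∉ {x | f x = true} := fun hm => this (subset_closure hm)
    exact bool_eq_false this
  · rintro ⟨S, hS⟩ h
    obtain ⟨y, hy1, hy2⟩ := mem_closure_iff.1 h _ (isOpen_agree (fun _ => false) S)
      (by simp)
    exact absurd (hS y (by simpa using hy1)) (by simp_all)

lemma VanB.presBot {ι : Type*} [Nonempty ι] {f : (ι → Bool) → Bool} {S : Finset ι}
    (h : VanB f S) : f (fun _ => false) = false := h _ (fun _ _ => rfl)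

lemma vanB_univ {ι : Type*} [Fintype ι] {f : (ι → Bool) → Bool}
    (h : f (fun _ => false) = false) : VanB f (Finset.univ) := by
  intro x hx
  have : x = (fun _ => false) := funext fun i => hx i (Finset.mem_univ i)
  rw [this]; exact h

/-! ### Measurability helpers -/

lemma measurable_of_bset {α : Type*} [MeasurableSpace α] {f : α → Bool}
    (h : MeasurableSet {x | f x = true}) : Measurable f := by
  apply measurable_to_countable
  intro y
  cases hy : f y
  · have : f ⁻¹' {false} = {x | f x = true}ᶜ := by
      ext z; cases hz : f z <;> simp [hz]
    rw [this]; exact h.compl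
  · have : f ⁻¹' {true} = {x | f x = true} := by ext z; simp
    rw [this]; exact h

lemma bset_of_measurable {α : Type*} [MeasurableSpace α] {f : α → Bool}
    (h : Measurable f) : MeasurableSet {x | f x = true} := by
  have : {x | f x = true} = f ⁻¹' {true} := by ext z; simp
  rw [this]; exact h (measurableSet_singleton true)

/-! ### Finite arity facts -/

lemma fin_measurable {n : ℕ} (S : Set (Fin n → Bool)) : MeasurableSet S :=
  S.toFinite.measurableSet

lemma fin_continuous {n : ℕ} (f : (Fin n → Bool) → Bool) : Continuous f :=
  continuous_of_discreteTopology

/-- In a finite power, the sup of an increasing sequence is attained. -/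
lemma fin_sup_attained {n : ℕ} {x : ℕ → (Fin n → Bool)} (hx : Monotone x) :
    ∃ Q, (fun i => decide (∃ q, x q i = true)) = x Q := by
  have h : ∀ i : Fin n, ∃ q, (decide (∃ q', x q' i = true) = true → x q i = true) := by
    intro i
    by_cases h : ∃ q', x q' i = true
    · exact ⟨h.choose, fun _ => h.choose_spec⟩
    · exact ⟨0, by simp [h]⟩
  choose qf hqf using h
  refine ⟨Finset.univ.sup qf, funext fun i => ?_⟩
  by_cases h : ∃ q', x q' i = true
  · have h1 : decide (∃ q', x q' i = true) = true := by simpa using h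
    rw [h1]
    exact (ble.1 (hx (Finset.le_sup (Finset.mem_univ i)) i) (hqf i h1)).symm
  · have h1 : decide (∃ q', x q' i = true) = false := by simpa using h
    rw [h1]
    refine (bool_eq_false fun ht => h ⟨_, ht⟩).symm

lemma fin_inf_attained {n : ℕ} {x : ℕ → (Fin n → Bool)} (hx : Antitone x) :
    ∃ Q, (fun i => decide (∀ q, x q i = true)) = x Q := by
  have h : ∀ i : Fin n, ∃ q, (decide (∀ q', x q' i = true) = false → x q i = false) := by
    intro i
    by_cases h : ∀ q', x q' i = true
    · exact ⟨0, by simp [h]⟩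
    · obtain ⟨q, hq⟩ := not_forall.1 h
      exact ⟨q, fun _ => bool_eq_false hq⟩
  choose qf hqf using h
  refine ⟨Finset.univ.sup qf, funext fun i => ?_⟩
  by_cases h : ∀ q', x q' i = true
  · have h1 : decide (∀ q', x q' i = true) = true := by simpa using h
    rw [h1]; exact (h _).symm
  · have h1 : decide (∀ q', x q' i = true) = false := by simpa using h
    rw [h1]
    have h2 := hqf i h1
    refine (bool_eq_false fun ht => ?_).symm
    have := ble.1 (hx (Finset.le_sup (Finset.mem_univ i)) i) ht
    rw [this] at h2; simp at h2


section Comp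
variable {ι κ : Type*}

def RIncr (f : (ι → Bool) → Bool) : Prop :=
  Monotone f ∧ ∀ x : ℕ → ι → Bool, Monotone x →
    f (fun i => decide (∃ q, x q i = true)) = decide (∃ q, f (x q) = true)

def RDecr (f : (ι → Bool) → Bool) : Prop :=
  Monotone f ∧ ∀ x : ℕ → ι → Bool, Antitone x →
    f (fun i => decide (∀ q, x q i = true)) = decide (∀ q, f (x q) = true)

variable (g : (ι → Bool) → Bool) (f : ι → (κ → Bool) → Bool)

lemma comp_monotone (hg : Monotone g) (hf : ∀ i, Monotone (f i)) :
    Monotone (fun x : κ → Bool => g (fun i => f i x)) :=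
  fun _ _ hxy => hg (fun i => hf i hxy)

lemma comp_presBot (hg : g (fun _ => false) = false)
    (hf : ∀ i, f i (fun _ => false) = false) :
    (fun x : κ → Bool => g (fun i => f i x)) (fun _ => false) = false := by
  show g (fun i => f i (fun _ => false)) = false
  have h : (fun i => f i (fun _ => false)) = (fun _ => false) := funext hf
  rw [h]; exact hg

lemma comp_bset (hg : MeasurableSet {x | g x = true})
    (hf : ∀ i, MeasurableSet {x | f i x = true}) :
    MeasurableSet {x : κ → Bool | g (fun i => f i x) = true} := by
  apply bset_of_measurable
  exact (measurable_of_bset hg).comp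
    (measurable_pi_iff.2 fun i => measurable_of_bset (hf i))

lemma comp_continuous (hg : Continuous g) (hf : ∀ i, Continuous (f i)) :
    Continuous (fun x : κ → Bool => g (fun i => f i x)) :=
  hg.comp (continuous_pi hf)

lemma comp_rincr (hg : RIncr g) (hf : ∀ i, RIncr (f i)) :
    RIncr (fun x : κ → Bool => g (fun i => f i x)) := by
  refine ⟨comp_monotone g f hg.1 (fun i => (hf i).1), ?_⟩
  intro x hx
  show g (fun i => f i (fun j => decide (∃ q, x q j = true))) = _
  have h1 : (fun i => f i (fun j => decide (∃ q, x q j = true)))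
      = (fun i => decide (∃ q, f i (x q) = true)) := funext fun i => (hf i).2 x hx
  rw [h1]
  exact hg.2 (fun q i => f i (x q)) (fun q q' hq i => (hf i).1 (hx hq))

lemma comp_rdecr (hg : RDecr g) (hf : ∀ i, RDecr (f i)) :
    RDecr (fun x : κ → Bool => g (fun i => f i x)) := by
  refine ⟨comp_monotone g f hg.1 (fun i => (hf i).1), ?_⟩
  intro x hx
  show g (fun i => f i (fun j => decide (∀ q, x q j = true))) = _
  have h1 : (fun i => f i (fun j => decide (∀ q, x q j = true)))
      = (fun i => decide (∀ q, f i (x q) = true)) := funext fun i => (hf i).2 x hx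
  rw [h1]
  exact hg.2 (fun q i => f i (x q)) (fun q q' hq i => (hf i).1 (hx hq))

lemma comp_vanB {S : Finset ι} (hg : VanB g S) (hf : ∀ i, ∃ T, VanB (f i) T) :
    ∃ T, VanB (fun x : κ → Bool => g (fun i => f i x)) T := by
  choose T hT using hf
  refine ⟨S.biUnion T, fun x hx => ?_⟩
  apply hg
  intro i hi
  exact hT i x (fun j hj => hx j (Finset.mem_biUnion.2 ⟨i, hi, hj⟩))

lemma proj_rincr (i : ι) : RIncr (fun x : ι → Bool => x i) :=
  ⟨fun _ _ h => h i, fun _ _ => rfl⟩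

lemma proj_rdecr (i : ι) : RDecr (fun x : ι → Bool => x i) :=
  ⟨fun _ _ h => h i, fun _ _ => rfl⟩

lemma proj_vanB (i : ι) : VanB (fun x : ι → Bool => x i) {i} :=
  fun x hx => hx i (Finset.mem_singleton_self i)

/-- A continuous monotone function is increasing-continuous. -/
lemma rincr_of_continuous (hc : Continuous g) (hm : Monotone g) : RIncr g := by
  refine ⟨hm, fun x hx => ?_⟩
  set s : ι → Bool := fun i => decide (∃ q, x q i = true) with hs
  have hxle : ∀ q, x q ≤ s := by
    intro q i
    rw [Bool.le_iff_imp]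
    intro h; simp only [hs, decide_eq_true_eq]; exact ⟨q, h⟩
  have hU : g ⁻¹' {g s} ∈ nhds s :=
    hc.continuousAt.preimage_mem_nhds (by simp [isOpen_discrete ({g s} : Set Bool) |>.mem_nhds rfl])
  obtain ⟨S, hS⟩ := exists_finset_nbhd hU
  have h : ∀ i : ι, ∃ q, (s i = true → x q i = true) := by
    intro i
    by_cases h : ∃ q, x q i = true
    · exact ⟨h.choose, fun _ => h.choose_spec⟩
    · refine ⟨0, fun hsi => absurd ?_ h⟩
      simp only [hs, decide_eq_true_eq] at hsi; exact hsi
  choose qf hqf using h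
  have hQ : x (S.sup qf) ∈ {y | ∀ i ∈ S, y i = s i} := by
    intro i hi
    cases hsi : s i
    · exact bool_eq_false fun ht => by
        have := Bool.le_iff_imp.1 (hxle (S.sup qf) i) ht
        rw [this] at hsi; cases hsi
    · exact Bool.le_iff_imp.1 (hx (Finset.le_sup hi) i) (hqf i hsi)
  have hgs : g (x (S.sup qf)) = g s := hS hQ
  cases hgs' : g s
  · have hall : ∀ q, g (x q) = false := fun q =>
      bool_eq_false fun ht => by
        have := Bool.le_iff_imp.1 (hm (hxle q)) ht
        rw [this] at hgs'; cases hgs'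
    symm
    rw [decide_eq_false_iff_not]
    rintro ⟨q, h⟩
    rw [hall q] at h; cases h
  · symm
    rw [decide_eq_true_eq]
    exact ⟨S.sup qf, by rw [hgs, hgs']⟩

/-- A continuous monotone function is decreasing-continuous. -/
lemma rdecr_of_continuous (hc : Continuous g) (hm : Monotone g) : RDecr g := by
  refine ⟨hm, fun x hx => ?_⟩
  set s : ι → Bool := fun i => decide (∀ q, x q i = true) with hs
  have hxle : ∀ q, s ≤ x q := by
    intro q i
    rw [Bool.le_iff_imp]
    intro h; simp only [hs, decide_eq_true_eq] at h; exact h q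
  have hU : g ⁻¹' {g s} ∈ nhds s :=
    hc.continuousAt.preimage_mem_nhds (by simp [isOpen_discrete ({g s} : Set Bool) |>.mem_nhds rfl])
  obtain ⟨S, hS⟩ := exists_finset_nbhd hU
  have h : ∀ i : ι, ∃ q, (s i = false → x q i = false) := by
    intro i
    by_cases h : ∀ q, x q i = true
    · exact ⟨0, by simp [hs, h]⟩
    · obtain ⟨q, hq⟩ := not_forall.1 h
      exact ⟨q, fun _ => bool_eq_false hq⟩
  choose qf hqf using h
  have hQ : x (S.sup qf) ∈ {y | ∀ i ∈ S, y i = s i} := by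
    intro i hi
    cases hsi : s i
    · refine bool_eq_false fun ht => ?_
      have := Bool.le_iff_imp.1 (hx (Finset.le_sup hi) i) ht
      rw [hqf i hsi] at this; cases this
    · exact Bool.le_iff_imp.1 (hxle (S.sup qf) i) hsi
  have hgs : g (x (S.sup qf)) = g s := hS hQ
  cases hgs' : g s
  · symm
    rw [decide_eq_false_iff_not]
    intro hforall
    have := hforall (S.sup qf)
    rw [hgs, hgs'] at this; cases this
  · have hall : ∀ q, g (x q) = true := fun q => Bool.le_iff_imp.1 (hm (hxle q)) hgs'
    symm
    rw [decide_eq_true_eq]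
    exact hall

/-- Monotone functions of finite arity are increasing-continuous. -/
lemma rincr_of_fin {n : ℕ} {g : (Fin n → Bool) → Bool} (hm : Monotone g) : RIncr g :=
  rincr_of_continuous g continuous_of_discreteTopology hm

lemma rdecr_of_fin {n : ℕ} {g : (Fin n → Bool) → Bool} (hm : Monotone g) : RDecr g :=
  rdecr_of_continuous g continuous_of_discreteTopology hm

end Comp

/-- Decreasing-continuity plus preserving bot implies vanishing near bot (arity ω case). -/
lemma rdecr_vanish {g : (ℕ → Bool) → Bool} (hd : RDecr g)
    (h0 : g (fun _ => false) = false) : ∃ S : Finset ℕ, VanB g S := by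
  by_contra h
  simp only [VanB, not_exists, not_forall] at h
  have hR : ∀ N : ℕ, g (fun i => decide (N ≤ i)) = true := by
    intro N
    obtain ⟨x, hx1, hx2⟩ := h (Finset.range N)
    have hxle : x ≤ fun i => decide (N ≤ i) := by
      intro i
      rw [Bool.le_iff_imp]
      intro hxi
      simp only [decide_eq_true_eq]
      by_contra hNi
      rw [hx1 i (Finset.mem_range.2 (Nat.lt_of_not_le hNi))] at hxi
      cases hxi
    have := Bool.le_iff_imp.1 (hd.1 hxle)
    cases hgx : g x
    · exact absurd hgx hx2
    · exact this hgx
  have hanti : Antitone (fun q : ℕ => fun i : ℕ => decide (q ≤ i)) := by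
    intro q q' hq i
    rw [Bool.le_iff_imp]
    simp only [decide_eq_true_eq]
    exact fun h' => le_trans hq h'
  have := hd.2 _ hanti
  have hinf : (fun i : ℕ => decide (∀ q, decide (q ≤ i) = true)) = (fun _ => false) := by
    funext i
    simp only [decide_eq_true_eq, decide_eq_false_iff_not, not_forall]
    exact ⟨i + 1, by simp [Nat.lt_irrefl]⟩
  rw [hinf, h0] at this
  symm at this
  rw [decide_eq_false_iff_not] at this
  exact this fun q => hR q


/-! ### Bridging to `BFun` -/

instance idxCountable (a : Arity) : Countable (Idx a) := by cases a <;> exact inferInstance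

instance idxNonempty (a : Arity) : Nonempty (Idx a) := by
  cases a with
  | none => exact inferInstance
  | some n => exact ⟨⟨0, n.pos⟩⟩

lemma incr_iff (f : BFun) : IncrCont f ↔ RIncr f.2 := Iff.rfl
lemma decr_iff (f : BFun) : DecrCont f ↔ RDecr f.2 := Iff.rfl

lemma vanishB_iff (f : BFun) : VanishNearBot f ↔ ∃ S, VanB f.2 S := vanish_iff f.2

lemma vanish_presBot {f : BFun} (h : VanishNearBot f) : PresBot f := by
  obtain ⟨S, hS⟩ := (vanishB_iff f).1 h
  exact hS.presBot

/-! ### The six classes are clones -/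

theorem isClone_N1 : IsClone N1 := by
  constructor
  · intro a i
    exact ⟨bset_of_measurable (measurable_pi_apply i), fun _ _ h => h i, rfl⟩
  · rintro a b g f ⟨hB, hM, h0⟩ hf
    exact ⟨comp_bset g f hB (fun i => (hf i).1),
      comp_monotone g f hM (fun i => (hf i).2.1),
      comp_presBot g f h0 (fun i => (hf i).2.2)⟩

theorem isClone_N2 : IsClone N2 := by
  constructor
  · intro a i
    exact ⟨bset_of_measurable (measurable_pi_apply i), proj_rincr i, rfl⟩
  · rintro a b g f ⟨hB, hM, h0⟩ hf
    exact ⟨comp_bset g f hB (fun i => (hf i).1),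
      comp_rincr g f hM (fun i => (hf i).2.1),
      comp_presBot g f h0 (fun i => (hf i).2.2)⟩

theorem isClone_N3 : IsClone N3 := by
  constructor
  · intro a i
    exact ⟨bset_of_measurable (measurable_pi_apply i), fun _ _ h => h i,
      (vanish_iff _).2 ⟨{i}, proj_vanB i⟩⟩
  · rintro a b g f ⟨hB, hM, h0⟩ hf
    obtain ⟨S, hS⟩ := (vanish_iff g).1 h0
    refine ⟨comp_bset g f hB (fun i => (hf i).1),
      comp_monotone g f hM (fun i => (hf i).2.1),
      (vanish_iff _).2 (comp_vanB g f hS (fun i => (vanish_iff (f i)).1 (hf i).2.2))⟩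

theorem isClone_N4 : IsClone N4 := by
  constructor
  · intro a i
    exact ⟨bset_of_measurable (measurable_pi_apply i), proj_rincr i,
      (vanish_iff _).2 ⟨{i}, proj_vanB i⟩⟩
  · rintro a b g f ⟨hB, hM, h0⟩ hf
    obtain ⟨S, hS⟩ := (vanish_iff g).1 h0
    refine ⟨comp_bset g f hB (fun i => (hf i).1),
      comp_rincr g f hM (fun i => (hf i).2.1),
      (vanish_iff _).2 (comp_vanB g f hS (fun i => (vanish_iff (f i)).1 (hf i).2.2))⟩

theorem isClone_N5 : IsClone N5 := by
  constructor
  · intro a i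
    exact ⟨bset_of_measurable (measurable_pi_apply i), proj_rdecr i, rfl⟩
  · rintro a b g f ⟨hB, hM, h0⟩ hf
    exact ⟨comp_bset g f hB (fun i => (hf i).1),
      comp_rdecr g f hM (fun i => (hf i).2.1),
      comp_presBot g f h0 (fun i => (hf i).2.2)⟩

theorem isClone_N6 : IsClone N6 := by
  constructor
  · intro a i
    exact ⟨continuous_apply i, fun _ _ h => h i, rfl⟩
  · rintro a b g f ⟨hB, hM, h0⟩ hf
    exact ⟨comp_continuous g f hB (fun i => (hf i).1),
      comp_monotone g f hM (fun i => (hf i).2.1),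
      comp_presBot g f h0 (fun i => (hf i).2.2)⟩

/-! ### Borel inclusions -/

theorem N1_borel : N1 ⊆ BorelClass := fun _ h => h.1
theorem N2_borel : N2 ⊆ BorelClass := fun _ h => h.1
theorem N3_borel : N3 ⊆ BorelClass := fun _ h => h.1
theorem N4_borel : N4 ⊆ BorelClass := fun _ h => h.1
theorem N5_borel : N5 ⊆ BorelClass := fun _ h => h.1

theorem contFun_borel {f : BFun} (h : IsContFun f) : IsBorelFun f := by
  have : {x | f.2 x = true} = f.2 ⁻¹' {true} := by ext z; simp
  rw [IsBorelFun, this]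
  exact (h.isOpen_preimage _ (isOpen_discrete _)).measurableSet

theorem N6_borel : N6 ⊆ BorelClass := fun _ h => contFun_borel h.1

/-! ### Finitary restrictions -/

theorem finRes_eq (C : Set BFun) (h1 : ∀ f ∈ C, Monotone f.2 ∧ PresBot f)
    (h2 : ∀ f : BFun, finitary f → Monotone f.2 → PresBot f → f ∈ C) :
    finRes C = {f | finitary f ∧ Monotone f.2 ∧ PresBot f} := by
  ext f
  constructor
  · rintro ⟨hf, hfin⟩
    exact ⟨hfin, h1 f hf⟩
  · rintro ⟨hfin, hm, hb⟩
    exact ⟨h2 f hfin hm hb, hfin⟩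

theorem fin_mem_all {f : BFun} (hfin : finitary f) (hm : Monotone f.2) (hb : PresBot f) :
    f ∈ N1 ∧ f ∈ N2 ∧ f ∈ N3 ∧ f ∈ N4 ∧ f ∈ N5 ∧ f ∈ N6 := by
  obtain ⟨a, g⟩ := f
  cases a with
  | none => exact absurd rfl hfin
  | some n =>
    have hB : IsBorelFun ⟨some n, g⟩ := fin_measurable _
    have hI : RIncr g := rincr_of_fin hm
    have hD : RDecr g := rdecr_of_fin hm
    have hV : VanishNearBot ⟨some n, g⟩ := (vanish_iff g).2 ⟨Finset.univ, vanB_univ hb⟩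
    have hC : IsContFun ⟨some n, g⟩ := fin_continuous g
    exact ⟨⟨hB, hm, hb⟩, ⟨hB, hI, hb⟩, ⟨hB, hm, hV⟩, ⟨hB, hI, hV⟩, ⟨hB, hD, hb⟩, ⟨hC, hm, hb⟩⟩

theorem finRes_N1 : finRes N1 = {f | finitary f ∧ Monotone f.2 ∧ PresBot f} :=
  finRes_eq _ (fun _ h => ⟨h.2.1, h.2.2⟩) (fun _ h1 h2 h3 => (fin_mem_all h1 h2 h3).1)
theorem finRes_N2 : finRes N2 = {f | finitary f ∧ Monotone f.2 ∧ PresBot f} :=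
  finRes_eq _ (fun _ h => ⟨h.2.1.1, h.2.2⟩) (fun _ h1 h2 h3 => (fin_mem_all h1 h2 h3).2.1)
theorem finRes_N3 : finRes N3 = {f | finitary f ∧ Monotone f.2 ∧ PresBot f} :=
  finRes_eq _ (fun _ h => ⟨h.2.1, vanish_presBot h.2.2⟩)
    (fun _ h1 h2 h3 => (fin_mem_all h1 h2 h3).2.2.1)
theorem finRes_N4 : finRes N4 = {f | finitary f ∧ Monotone f.2 ∧ PresBot f} :=
  finRes_eq _ (fun _ h => ⟨h.2.1.1, vanish_presBot h.2.2⟩)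
    (fun _ h1 h2 h3 => (fin_mem_all h1 h2 h3).2.2.2.1)
theorem finRes_N5 : finRes N5 = {f | finitary f ∧ Monotone f.2 ∧ PresBot f} :=
  finRes_eq _ (fun _ h => ⟨h.2.1.1, h.2.2⟩)
    (fun _ h1 h2 h3 => (fin_mem_all h1 h2 h3).2.2.2.2.1)
theorem finRes_N6 : finRes N6 = {f | finitary f ∧ Monotone f.2 ∧ PresBot f} :=
  finRes_eq _ (fun _ h => ⟨h.2.1, h.2.2⟩)
    (fun _ h1 h2 h3 => (fin_mem_all h1 h2 h3).2.2.2.2.2)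

/-! ### Witness functions -/

/-- `g₀(u) = u 0 ∧ ⋁_{i} u (i+1)`. -/
noncomputable def gzf : (ℕ → Bool) → Bool := fun u => decide (u 0 = true ∧ ∃ i, u (i + 1) = true)

lemma bor_borel : MeasurableSet {x : ℕ → Bool | bigOr x = true} := by
  have h : {x : ℕ → Bool | bigOr x = true} = ⋃ i, {x | x i = true} := by
    ext x; simp [bigOr]
  rw [h]
  exact MeasurableSet.iUnion fun i => bset_of_measurable (measurable_pi_apply i)

lemma bor_mono : Monotone bigOr := by
  intro x y h
  rw [Bool.le_iff_imp]
  simp only [bigOr, decide_eq_true_eq]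
  rintro ⟨i, hi⟩
  exact ⟨i, Bool.le_iff_imp.1 (h i) hi⟩

lemma bor_rincr : RIncr bigOr := by
  refine ⟨bor_mono, fun x hx => ?_⟩
  simp only [bigOr, decide_eq_true_eq]
  rw [decide_eq_decide]
  constructor
  · rintro ⟨i, q, h⟩; exact ⟨q, i, h⟩
  · rintro ⟨q, i, h⟩; exact ⟨i, q, h⟩

lemma bor_presBot : bigOr (fun _ => false) = false := by simp [bigOr]

lemma bor_not_vanishB : ¬ ∃ S : Finset ℕ, VanB bigOr S := by
  rintro ⟨S, hS⟩
  set m := S.sup id + 1 with hm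
  have hmS : m ∉ S := fun h => by
    have : m ≤ S.sup id := Finset.le_sup (f := id) h
    omega
  have h1 := hS (fun i => decide (i = m)) (fun i hi => by
    simp only [decide_eq_false_iff_not]
    rintro rfl
    exact hmS hi)
  have : bigOr (fun i => decide (i = m)) = true := by
    simp only [bigOr, decide_eq_true_eq]
    exact ⟨m, by simp⟩
  rw [h1] at this; cases this

lemma band_borel : MeasurableSet {x : ℕ → Bool | bigAnd x = true} := by
  have h : {x : ℕ → Bool | bigAnd x = true} = ⋂ i, {x | x i = true} := by
    ext x; simp [bigAnd]
  rw [h]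
  exact MeasurableSet.iInter fun i => bset_of_measurable (measurable_pi_apply i)

lemma band_mono : Monotone bigAnd := by
  intro x y h
  rw [Bool.le_iff_imp]
  simp only [bigAnd, decide_eq_true_eq]
  intro hx i
  exact Bool.le_iff_imp.1 (h i) (hx i)

lemma band_rdecr : RDecr bigAnd := by
  refine ⟨band_mono, fun x hx => ?_⟩
  simp only [bigAnd, decide_eq_true_eq]
  rw [decide_eq_decide]
  constructor
  · intro h q i; exact h i q
  · intro h i q; exact h q i

lemma band_presBot : bigAnd (fun _ => false) = false := by
  simp only [bigAnd, decide_eq_false_iff_not]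
  intro h
  exact absurd (h 0) (by simp)

lemma band_not_rincr : ¬ RIncr bigAnd := by
  rintro ⟨_, h2⟩
  have hmono : Monotone (fun q : ℕ => fun i : ℕ => decide (i < q)) := by
    intro q q' hq i
    rw [Bool.le_iff_imp]
    simp only [decide_eq_true_eq]
    omega
  have := h2 _ hmono
  have hL : bigAnd (fun i => decide (∃ q, (fun q : ℕ => fun i : ℕ => decide (i < q)) q i = true)) = true := by
    simp only [bigAnd, decide_eq_true_eq]
    intro i
    exact ⟨i + 1, by omega⟩
  rw [hL] at this
  symm at this
  rw [decide_eq_true_eq] at this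
  obtain ⟨q, hq⟩ := this
  simp only [bigAnd, decide_eq_true_eq] at hq
  have := hq q
  simp at this

lemma gzf_borel : MeasurableSet {x : ℕ → Bool | gzf x = true} := by
  have h : {x : ℕ → Bool | gzf x = true}
      = {x : ℕ → Bool | x 0 = true} ∩ ⋃ i, {x | x (i + 1) = true} := by
    ext x; simp [gzf]
  rw [h]
  exact (bset_of_measurable (measurable_pi_apply 0)).inter
    (MeasurableSet.iUnion fun i => bset_of_measurable (measurable_pi_apply (i + 1)))

lemma gzf_mono : Monotone gzf := by
  intro x y h
  rw [Bool.le_iff_imp]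
  simp only [gzf, decide_eq_true_eq]
  rintro ⟨h0, i, hi⟩
  exact ⟨Bool.le_iff_imp.1 (h 0) h0, i, Bool.le_iff_imp.1 (h (i + 1)) hi⟩

lemma gzf_rincr : RIncr gzf := by
  refine ⟨gzf_mono, fun x hx => ?_⟩
  simp only [gzf, decide_eq_true_eq]
  rw [decide_eq_decide]
  constructor
  · rintro ⟨⟨q1, h1⟩, i, q2, h2⟩
    refine ⟨q1 ⊔ q2, Bool.le_iff_imp.1 (hx le_sup_left 0) h1,
      i, Bool.le_iff_imp.1 (hx le_sup_right (i + 1)) h2⟩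
  · rintro ⟨q, h1, i, h2⟩
    exact ⟨⟨q, h1⟩, i, q, h2⟩

lemma gzf_vanB : VanB gzf {0} := by
  intro x hx
  simp only [gzf, decide_eq_false_iff_not]
  rintro ⟨h0, -⟩
  rw [hx 0 (Finset.mem_singleton_self 0)] at h0
  cases h0

lemma gzf_not_rdecr : ¬ RDecr gzf := by
  rintro ⟨_, h2⟩
  have hanti : Antitone (fun q : ℕ => fun i : ℕ => decide (i = 0 ∨ q ≤ i)) := by
    intro q q' hq i
    rw [Bool.le_iff_imp]
    simp only [decide_eq_true_eq]
    omega
  have := h2 _ hanti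
  have hL : gzf (fun i => decide (∀ q, (fun q : ℕ => fun i : ℕ => decide (i = 0 ∨ q ≤ i)) q i = true)) = false := by
    simp only [gzf, decide_eq_false_iff_not, not_and]
    rintro - ⟨i, hi⟩
    simp only [decide_eq_true_eq] at hi
    have := hi (i + 2)
    omega
  rw [hL] at this
  symm at this
  rw [decide_eq_false_iff_not] at this
  apply this
  intro q
  simp only [gzf, decide_eq_true_eq]
  refine ⟨by simp, q, by simp⟩

/-! ### Positive sets and the positive separation theorem -/

/-- The sets in the smallest family containing coordinate sets and closed under countable
unions and intersections. -/
inductive PosSet : Set (ℕ → Bool) → Prop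
  | basic (i : ℕ) : PosSet {x | x i = true}
  | iUnion (S : ℕ → Set (ℕ → Bool)) : (∀ n, PosSet (S n)) → PosSet (⋃ n, S n)
  | iInter (S : ℕ → Set (ℕ → Bool)) : (∀ n, PosSet (S n)) → PosSet (⋂ n, S n)

def PosSep (s t : Set (ℕ → Bool)) : Prop := ∃ u, s ⊆ u ∧ Disjoint t u ∧ PosSet u

lemma PosSep.iUnion {s t : ℕ → Set (ℕ → Bool)}
    (h : ∀ m n, PosSep (s m) (t n)) : PosSep (⋃ n, s n) (⋃ m, t m) := by
  choose u hsu htu hu using h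
  refine ⟨⋃ m, ⋂ n, u m n, ?_, ?_, ?_⟩
  · refine iUnion_subset fun m => subset_iUnion_of_subset m ?_
    exact subset_iInter fun n => hsu m n
  · simp_rw [disjoint_iUnion_left, disjoint_iUnion_right]
    intro n m
    apply Disjoint.mono_right _ (htu m n)
    apply iInter_subset
  · exact PosSet.iUnion _ fun m => PosSet.iInter _ fun n => hu m n

theorem posSep_range {f g : (ℕ → ℕ) → (ℕ → Bool)} (hf : Continuous f) (hg : Continuous g)
    (h : ∀ a b, ¬ f a ≤ g b) : PosSep (range f) (range g) := by
  by_contra hfg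
  have I : ∀ n x y, ¬PosSep (f '' PiNat.cylinder x n) (g '' PiNat.cylinder y n) →
      ∃ x' y', x' ∈ PiNat.cylinder x n ∧ y' ∈ PiNat.cylinder y n ∧
      ¬PosSep (f '' PiNat.cylinder x' (n + 1)) (g '' PiNat.cylinder y' (n + 1)) := by
    intro n x y
    contrapose!
    intro H
    rw [← PiNat.iUnion_cylinder_update x n, ← PiNat.iUnion_cylinder_update y n,
      image_iUnion, image_iUnion]
    exact PosSep.iUnion fun i j =>
      H _ _ (PiNat.update_mem_cylinder _ _ _) (PiNat.update_mem_cylinder _ _ _)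
  let A :=
    { p : ℕ × (ℕ → ℕ) × (ℕ → ℕ) //
      ¬PosSep (f '' PiNat.cylinder p.2.1 p.1) (g '' PiNat.cylinder p.2.2 p.1) }
  have hA : ∀ p : A, ∃ q : A,
      q.1.1 = p.1.1 + 1 ∧ q.1.2.1 ∈ PiNat.cylinder p.1.2.1 p.1.1 ∧
        q.1.2.2 ∈ PiNat.cylinder p.1.2.2 p.1.1 := by
    rintro ⟨⟨n, x, y⟩, hp⟩
    rcases I n x y hp with ⟨x', y', hx', hy', h'⟩
    exact ⟨⟨⟨n + 1, x', y'⟩, h'⟩, rfl, hx', hy'⟩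
  choose F hFn hFx hFy using hA
  let p0 : A := ⟨⟨0, fun _ => 0, fun _ => 0⟩, by
    simp only [PiNat.cylinder_zero, image_univ]; exact hfg⟩
  let p : ℕ → A := fun n => F^[n] p0
  have prec : ∀ n, p (n + 1) = F (p n) := fun n => by
    simp only [p, Function.iterate_succ', Function.comp]
  have pn_fst : ∀ n, (p n).1.1 = n := by
    intro n
    induction' n with n IH
    · rfl
    · simp only [prec, hFn, IH]
  have Ix : ∀ m n, m + 1 ≤ n → (p n).1.2.1 m = (p (m + 1)).1.2.1 m := by
    intro m
    apply Nat.le_induction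
    · rfl
    intro n hmn IH
    have I : (F (p n)).val.snd.fst m = (p n).val.snd.fst m := by
      apply hFx (p n) m
      rw [pn_fst]
      exact hmn
    rw [prec, I, IH]
  have Iy : ∀ m n, m + 1 ≤ n → (p n).1.2.2 m = (p (m + 1)).1.2.2 m := by
    intro m
    apply Nat.le_induction
    · rfl
    intro n hmn IH
    have I : (F (p n)).val.snd.snd m = (p n).val.snd.snd m := by
      apply hFy (p n) m
      rw [pn_fst]
      exact hmn
    rw [prec, I, IH]
  set x : ℕ → ℕ := fun n => (p (n + 1)).1.2.1 n with hx
  set y : ℕ → ℕ := fun n => (p (n + 1)).1.2.2 n with hy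
  have M : ∀ n, ¬PosSep (f '' PiNat.cylinder x n) (g '' PiNat.cylinder y n) := by
    intro n
    convert (p n).2 using 3
    · rw [pn_fst, ← PiNat.mem_cylinder_iff_eq, PiNat.mem_cylinder_iff]
      intro i hi
      rw [hx]
      exact (Ix i n hi).symm
    · rw [pn_fst, ← PiNat.mem_cylinder_iff_eq, PiNat.mem_cylinder_iff]
      intro i hi
      rw [hy]
      exact (Iy i n hi).symm
  obtain ⟨i0, hfx, hgy⟩ : ∃ i0, f x i0 = true ∧ g y i0 = false := by
    have := h x y
    rw [Pi.le_def] at this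
    push_neg at this
    obtain ⟨i0, hi0⟩ := this
    rw [Bool.lt_iff] at hi0
    exact ⟨i0, hi0.2, hi0.1⟩
  set u : Set (ℕ → Bool) := {z | z i0 = true} with hu
  have u_open : IsOpen u := by
    have h2 : u = (fun z : ℕ → Bool => z i0) ⁻¹' {b | b = true} := rfl
    rw [h2]; exact (isOpen_discrete _).preimage (continuous_apply i0)
  have v_open : IsOpen uᶜ := by
    have h2 : uᶜ = (fun z : ℕ → Bool => z i0) ⁻¹' {b | ¬ b = true} := rfl
    rw [h2]; exact (isOpen_discrete _).preimage (continuous_apply i0)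
  letI : MetricSpace (ℕ → ℕ) := PiNat.metricSpaceNatNat
  obtain ⟨εx, εxpos, hεx⟩ : ∃ (εx : ℝ), εx > 0 ∧ Metric.ball x εx ⊆ f ⁻¹' u := by
    apply Metric.mem_nhds_iff.1
    exact hf.continuousAt.preimage_mem_nhds (u_open.mem_nhds hfx)
  obtain ⟨εy, εypos, hεy⟩ : ∃ (εy : ℝ), εy > 0 ∧ Metric.ball y εy ⊆ g ⁻¹' uᶜ := by
    apply Metric.mem_nhds_iff.1
    refine hg.continuousAt.preimage_mem_nhds (v_open.mem_nhds ?_)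
    simp only [hu, mem_compl_iff, mem_setOf_eq, hgy]
    simp
  obtain ⟨n, hn⟩ : ∃ n : ℕ, (1 / 2 : ℝ) ^ n < min εx εy :=
    exists_pow_lt_of_lt_one (lt_min εxpos εypos) (by norm_num)
  have B : PosSep (f '' PiNat.cylinder x n) (g '' PiNat.cylinder y n) := by
    refine ⟨u, ?_, ?_, PosSet.basic i0⟩
    · rw [image_subset_iff]
      apply Subset.trans _ hεx
      intro z hz
      rw [PiNat.mem_cylinder_iff_dist_le] at hz
      exact hz.trans_lt (hn.trans_le (min_le_left _ _))
    · rw [Set.disjoint_left]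
      intro z hz hzu
      have : z ∈ g '' PiNat.cylinder y n := hz
      obtain ⟨w, hw, rfl⟩ := this
      rw [PiNat.mem_cylinder_iff_dist_le] at hw
      have : g w ∈ uᶜ := hεy (lt_of_le_of_lt hw (hn.trans_le (min_le_right _ _)))
      exact this hzu
  exact M n B

theorem posSet_of_borel_monotone {B : Set (ℕ → Bool)} (hB : MeasurableSet B)
    (hmono : ∀ x y : ℕ → Bool, x ≤ y → x ∈ B → y ∈ B) (hne : B.Nonempty)
    (h0 : (fun _ => false) ∉ B) : PosSet B := by
  haveI : PolishSpace (ℕ → Bool) := by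
    letI : MetricSpace (ℕ → Bool) := PiNat.metricSpaceOfDiscreteUniformity (fun _ => rfl)
    infer_instance
  have hA : MeasureTheory.AnalyticSet B := hB.analyticSet
  have hA' : MeasureTheory.AnalyticSet Bᶜ := hB.compl.analyticSet
  rw [MeasureTheory.AnalyticSet_def] at hA hA'
  rcases hA with rfl | ⟨f, hfc, hfr⟩
  · exact absurd hne (by simp)
  rcases hA' with hB' | ⟨g, hgc, hgr⟩
  · refine absurd ?_ h0
    by_contra h0'
    have : (fun _ => false : ℕ → Bool) ∈ Bᶜ := h0'
    rw [hB'] at this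
    exact this
  have hcond : ∀ a b, ¬ f a ≤ g b := by
    intro a b hle
    have h1 : f a ∈ B := by rw [← hfr]; exact mem_range_self a
    have h2 : g b ∈ Bᶜ := by rw [← hgr]; exact mem_range_self b
    exact h2 (hmono _ _ hle h1)
  obtain ⟨u, hsub, hdis, hpos⟩ := posSep_range hfc hgc hcond
  rw [hfr] at hsub
  rw [hgr] at hdis
  have husub : u ⊆ B := by
    intro z hz
    by_contra hzB
    exact Set.disjoint_left.1 hdis hzB hz
  have : B = u := hsub.antisymm husub
  rw [this]
  exact hpos

/-! ### Working inside a clone with the prescribed finitary restriction -/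

section CloneCtx

variable {F : Set BFun}

/-- Composing a finitary monotone bot-preserving core with projections. -/
lemma compFin (hF : IsClone F)
    (hfm : ∀ f : BFun, finitary f → Monotone f.2 → PresBot f → f ∈ F)
    {m : ℕ} (g' : (Fin (m + 1) → Bool) → Bool)
    (hm : Monotone g') (h0 : g' (fun _ => false) = false) (b : Arity) (ρ : Fin (m + 1) → Idx b) :
    (⟨b, fun x => g' (fun j => x (ρ j))⟩ : BFun) ∈ F := by
  have harity : (⟨some ⟨m + 1, Nat.succ_pos m⟩, g'⟩ : BFun) ∈ F :=
    hfm _ (fun h => nomatch h) hm h0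
  exact hF.comp (some ⟨m + 1, Nat.succ_pos m⟩) b g' (fun j x => x (ρ j)) harity
    (fun j => hF.proj b (ρ j))

lemma constFalse_mem (hF : IsClone F)
    (hfm : ∀ f : BFun, finitary f → Monotone f.2 → PresBot f → f ∈ F) (b : Arity) :
    (⟨b, fun _ => false⟩ : BFun) ∈ F := by
  have := compFin hF hfm (m := 0) (fun _ => false) (fun _ _ _ => le_refl _) rfl b
    (fun _ => Classical.arbitrary (Idx b))
  exact this

lemma finitary_props {F : Set BFun}
    (hfin : finRes F = {f | finitary f ∧ Monotone f.2 ∧ PresBot f})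
    {h : BFun} (hh : h ∈ F) (hf' : finitary h) : Monotone h.2 ∧ PresBot h := by
  have : h ∈ finRes F := ⟨hh, hf'⟩
  rw [hfin] at this
  exact ⟨this.2.1, this.2.2⟩

lemma hfm_of_finres {F : Set BFun}
    (hfin : finRes F = {f | finitary f ∧ Monotone f.2 ∧ PresBot f}) :
    ∀ f : BFun, finitary f → Monotone f.2 → PresBot f → f ∈ F := by
  intro f h1 h2 h3
  have : f ∈ finRes F := by rw [hfin]; exact ⟨h1, h2, h3⟩
  exact this.1

/-- Every member of such a clone preserves bot. -/
lemma F_presBot (hF : IsClone F)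
    (hfin : finRes F = {f | finitary f ∧ Monotone f.2 ∧ PresBot f})
    {f : BFun} (hf : f ∈ F) : PresBot f := by
  have hfm := hfm_of_finres hfin
  have hc : (⟨some 1, fun _ : Fin 1 → Bool => false⟩ : BFun) ∈ F :=
    hfm _ (fun h => nomatch h) (fun _ _ _ => le_refl _) rfl
  have hf' : (⟨f.1, f.2⟩ : BFun) ∈ F := by rw [Sigma.eta]; exact hf
  have hcomp := hF.comp f.1 (some 1) f.2 (fun _ _ => false) hf' (fun _ => hc)
  exact (finitary_props hfin hcomp (fun h => nomatch h)).2

/-- Every member of such a clone is monotone. -/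
lemma F_mono (hF : IsClone F)
    (hfin : finRes F = {f | finitary f ∧ Monotone f.2 ∧ PresBot f})
    {f : BFun} (hf : f ∈ F) : Monotone f.2 := by
  have hfm := hfm_of_finres hfin
  intro x y hxy
  set w : Idx f.1 → (Fin 2 → Bool) → Bool := fun i u => (u 0 && x i) || (u 1 && y i) with hw
  have hwmem : ∀ i, (⟨some 2, w i⟩ : BFun) ∈ F := by
    intro i
    refine hfm _ (fun h => nomatch h) ?_ (by simp [PresBot, hw])
    intro u v huv
    rw [Bool.le_iff_imp]
    simp only [hw, Bool.or_eq_true, Bool.and_eq_true]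
    rintro (⟨h1, h2⟩ | ⟨h1, h2⟩)
    · exact Or.inl ⟨Bool.le_iff_imp.1 (huv 0) h1, h2⟩
    · exact Or.inr ⟨Bool.le_iff_imp.1 (huv 1) h1, h2⟩
  have hf' : (⟨f.1, f.2⟩ : BFun) ∈ F := by rw [Sigma.eta]; exact hf
  have hcomp := hF.comp f.1 (some 2) f.2 w hf' hwmem
  have hmono := (finitary_props hfin hcomp (fun h => nomatch h)).1
  have hle : (fun j : Fin 2 => decide (j = 0)) ≤ (fun _ : Fin 2 => true) :=
    fun j => Bool.le_true _
  have := hmono hle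
  simp only at this
  have e1 : f.2 (fun i => w i (fun j => decide (j = 0))) = f.2 x := by
    refine congrArg f.2 (funext fun i => ?_)
    simp [hw, show ((0 : Fin 2) = 0) = True by simp, show ((1 : Fin 2) = 0) = False by decide]
  have e2 : f.2 (fun i => w i (fun _ => true)) = f.2 y := by
    refine congrArg f.2 (funext fun i => ?_)
    simp only [hw, Bool.true_and]
    cases hxi : x i
    · simp
    · have : y i = true := Bool.le_iff_imp.1 (hxy i) hxi
      simp [this]
  rw [e1, e2] at this
  exact this

/-- Every continuous function on `2^ω` depends on finitely many coordinates. -/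
lemma contDep {g : (ℕ → Bool) → Bool} (hc : Continuous g) :
    ∃ M : ℕ, ∀ x y : ℕ → Bool, (∀ i < M, x i = y i) → g x = g y := by
  have hcov : ∀ x : ℕ → Bool, ∃ S : Finset ℕ, {y | ∀ i ∈ S, y i = x i} ⊆ g ⁻¹' {g x} :=
    fun x => exists_finset_nbhd
      (hc.continuousAt.preimage_mem_nhds ((isOpen_discrete _).mem_nhds rfl))
  choose S hS using hcov
  obtain ⟨t, ht⟩ := IsCompact.elim_finite_subcover isCompact_univ
    (fun x : ℕ → Bool => {y | ∀ i ∈ S x, y i = x i}) (fun x => isOpen_agree x (S x))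
    (fun y _ => mem_iUnion.2 ⟨y, fun i _ => rfl⟩)
  refine ⟨(t.biUnion S).sup id + 1, fun x y hxy => ?_⟩
  obtain ⟨x0, hx0t, hx0⟩ := mem_iUnion₂.1 (ht (mem_univ x))
  have hgx : g x = g x0 := hS x0 hx0
  have hy : y ∈ {z | ∀ i ∈ S x0, z i = x0 i} := by
    intro i hi
    have hiN : i < (t.biUnion S).sup id + 1 :=
      Nat.lt_succ_of_le (Finset.le_sup (f := id) (Finset.mem_biUnion.2 ⟨x0, hx0t, hi⟩))
    rw [← hxy i hiN]
    exact hx0 i hi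
  have hgy : g y = g x0 := hS x0 hy
  rw [hgx, hgy]

/-- All continuous monotone bot-preserving functions belong to the clone. -/
lemma N6_sub_F (hF : IsClone F)
    (hfin : finRes F = {f | finitary f ∧ Monotone f.2 ∧ PresBot f}) : N6 ⊆ F := by
  have hfm := hfm_of_finres hfin
  rintro ⟨a, g⟩ ⟨hc, hm, h0⟩
  cases a with
  | some n => exact hfm _ (fun h => nomatch h) hm h0
  | none =>
    obtain ⟨M, hM⟩ := contDep hc
    set g' : (Fin (M + 1) → Bool) → Bool :=
      fun s => g (fun i => if h : i < M + 1 then s ⟨i, h⟩ else false) with hg'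
    have key : (fun x : ℕ → Bool => g' (fun j => x j.val)) = g := by
      funext x
      apply hM
      intro i hi
      simp only [hg']
      rw [dif_pos (by omega : i < M + 1)]
    have hm' : Monotone g' := by
      intro s t hst
      apply hm
      intro i
      by_cases h : i < M + 1
      · simp only [hg', dif_pos h]; exact hst ⟨i, h⟩
      · simp only [hg', dif_neg h]; exact le_refl _
    have h0' : g' (fun _ => false) = false := by
      have : (fun i : ℕ => if h : i < M + 1 then (fun _ : Fin (M+1) => false) ⟨i, h⟩ else false)
          = (fun _ : ℕ => false) := by
        funext i
        by_cases h : i < M + 1 <;> simp [h]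
      show g _ = false
      rw [this]
      exact h0
    have hmem := compFin hF hfm g' hm' h0' none (fun j => j.val)
    rw [show (⟨none, g⟩ : BFun) = ⟨none, fun x : ℕ → Bool => g' (fun j => x j.val)⟩ from by rw [key]]
    exact hmem

end CloneCtx

/-! ### Some infinitary members of the clone -/

section Members

variable {F : Set BFun}

lemma andUpTo_mem (hF : IsClone F)
    (hfm : ∀ f : BFun, finitary f → Monotone f.2 → PresBot f → f ∈ F) (m : ℕ) :
    (⟨none, fun u : ℕ → Bool => decide (∀ j, j ≤ m → u j = true)⟩ : BFun) ∈ F := by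
  have key : (fun u : ℕ → Bool =>
      (fun s : Fin (m + 1) → Bool => decide (∀ j : Fin (m + 1), s j = true))
        (fun j => u j.val))
      = (fun u : ℕ → Bool => decide (∀ j, j ≤ m → u j = true)) := by
    funext u
    rw [decide_eq_decide]
    constructor
    · intro h j hj; exact h ⟨j, by omega⟩
    · intro h j; exact h j.val (by omega)
  have hm' : Monotone (fun s : Fin (m + 1) → Bool => decide (∀ j : Fin (m + 1), s j = true)) := by
    intro s t hst
    rw [Bool.le_iff_imp]
    simp only [decide_eq_true_eq]
    intro h j
    exact Bool.le_iff_imp.1 (hst j) (h j)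
  have h0' : (fun s : Fin (m + 1) → Bool => decide (∀ j : Fin (m + 1), s j = true))
      (fun _ => false) = false := by
    simp only [decide_eq_false_iff_not, not_forall]
    exact ⟨⟨0, Nat.succ_pos m⟩, by simp⟩
  have := compFin hF hfm _ hm' h0' none (fun j : Fin (m + 1) => j.val)
  rw [show (⟨none, fun u : ℕ → Bool => decide (∀ j, j ≤ m → u j = true)⟩ : BFun)
    = ⟨none, fun u : ℕ → Bool =>
        (fun s : Fin (m + 1) → Bool => decide (∀ j : Fin (m + 1), s j = true))
          (fun j => u j.val)⟩ from by rw [key]]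
  exact this

lemma orUpTo_mem (hF : IsClone F)
    (hfm : ∀ f : BFun, finitary f → Monotone f.2 → PresBot f → f ∈ F) (m : ℕ) :
    (⟨none, fun u : ℕ → Bool => decide (∃ j, j ≤ m ∧ u j = true)⟩ : BFun) ∈ F := by
  have key : (fun u : ℕ → Bool =>
      (fun s : Fin (m + 1) → Bool => decide (∃ j : Fin (m + 1), s j = true))
        (fun j => u j.val))
      = (fun u : ℕ → Bool => decide (∃ j, j ≤ m ∧ u j = true)) := by
    funext u
    rw [decide_eq_decide]
    constructor
    · rintro ⟨j, hj⟩; exact ⟨j.val, by omega, hj⟩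
    · rintro ⟨j, hj, hju⟩; exact ⟨⟨j, by omega⟩, hju⟩
  have hm' : Monotone (fun s : Fin (m + 1) → Bool => decide (∃ j : Fin (m + 1), s j = true)) := by
    intro s t hst
    rw [Bool.le_iff_imp]
    simp only [decide_eq_true_eq]
    rintro ⟨j, hj⟩
    exact ⟨j, Bool.le_iff_imp.1 (hst j) hj⟩
  have h0' : (fun s : Fin (m + 1) → Bool => decide (∃ j : Fin (m + 1), s j = true))
      (fun _ => false) = false := by simp
  have := compFin hF hfm _ hm' h0' none (fun j : Fin (m + 1) => j.val)
  rw [show (⟨none, fun u : ℕ → Bool => decide (∃ j, j ≤ m ∧ u j = true)⟩ : BFun)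
    = ⟨none, fun u : ℕ → Bool =>
        (fun s : Fin (m + 1) → Bool => decide (∃ j : Fin (m + 1), s j = true))
          (fun j => u j.val)⟩ from by rw [key]]
  exact this

/-- `u ↦ ⋁_{j < m} u (j+1)` is in the clone. -/
lemma orShift_mem (hF : IsClone F)
    (hfm : ∀ f : BFun, finitary f → Monotone f.2 → PresBot f → f ∈ F) (m : ℕ) :
    (⟨none, fun u : ℕ → Bool => decide (∃ j, j < m ∧ u (j + 1) = true)⟩ : BFun) ∈ F := by
  have key : (fun u : ℕ → Bool =>
      (fun s : Fin (m + 1) → Bool => decide (∃ j : Fin (m + 1), j.val < m ∧ s j = true))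
        (fun j => u (j.val + 1)))
      = (fun u : ℕ → Bool => decide (∃ j, j < m ∧ u (j + 1) = true)) := by
    funext u
    rw [decide_eq_decide]
    constructor
    · rintro ⟨j, hj, hju⟩; exact ⟨j.val, hj, hju⟩
    · rintro ⟨j, hj, hju⟩; exact ⟨⟨j, by omega⟩, hj, hju⟩
  have hm' : Monotone (fun s : Fin (m + 1) → Bool =>
      decide (∃ j : Fin (m + 1), j.val < m ∧ s j = true)) := by
    intro s t hst
    rw [Bool.le_iff_imp]
    simp only [decide_eq_true_eq]
    rintro ⟨j, hj, hju⟩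
    exact ⟨j, hj, Bool.le_iff_imp.1 (hst j) hju⟩
  have h0' : (fun s : Fin (m + 1) → Bool =>
      decide (∃ j : Fin (m + 1), j.val < m ∧ s j = true)) (fun _ => false) = false := by simp
  have := compFin hF hfm _ hm' h0' none (fun j : Fin (m + 1) => j.val + 1)
  rw [show (⟨none, fun u : ℕ → Bool => decide (∃ j, j < m ∧ u (j + 1) = true)⟩ : BFun)
    = ⟨none, fun u : ℕ → Bool =>
        (fun s : Fin (m + 1) → Bool => decide (∃ j : Fin (m + 1), j.val < m ∧ s j = true))
          (fun j => u (j.val + 1))⟩ from by rw [key]]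
  exact this

/-- Truncation `x ↦ g (x↾n ⌢ 0⃗)` is in the clone, for `g ∈ F` of infinite arity. -/
lemma trunc0_mem (hF : IsClone F)
    (hfm : ∀ f : BFun, finitary f → Monotone f.2 → PresBot f → f ∈ F)
    {g : (ℕ → Bool) → Bool} (hm : Monotone g)
    (h0 : g (fun _ => false) = false) (n : ℕ) :
    (⟨none, fun x : ℕ → Bool => g (fun i => if i < n then x i else false)⟩ : BFun) ∈ F := by
  set g' : (Fin (n + 1) → Bool) → Bool :=
    fun s => g (fun i => if h : i < n then s ⟨i, by omega⟩ else false) with hg'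
  have key : (fun x : ℕ → Bool => g' (fun j => x j.val))
      = (fun x : ℕ → Bool => g (fun i => if i < n then x i else false)) := by
    funext x
    refine congrArg g (funext fun i => ?_)
    by_cases h : i < n <;> simp [hg', h]
  have hm' : Monotone g' := by
    intro s t hst
    apply hm
    intro i
    by_cases h : i < n
    · simp only [hg', dif_pos h]; exact hst _
    · simp only [hg', dif_neg h]; exact le_refl _
  have h0' : g' (fun _ => false) = false := by
    have harg : (fun i : ℕ => if h : i < n then (fun _ : Fin (n + 1) => false) ⟨i, by omega⟩
        else false) = (fun _ : ℕ => false) := by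
      funext i; by_cases h : i < n <;> simp [h]
    show g _ = false
    rw [harg]
    exact h0
  have := compFin hF hfm g' hm' h0' none (fun j : Fin (n + 1) => j.val)
  rw [show (⟨none, fun x : ℕ → Bool => g (fun i => if i < n then x i else false)⟩ : BFun)
    = ⟨none, fun x : ℕ → Bool => g' (fun j => x j.val)⟩ from by rw [key]]
  exact this

/-- Truncation with ones `x ↦ g (x↾n ⌢ 1⃗)` for `n ≥ N`, the vanishing bound. -/
lemma trunc1_mem (hF : IsClone F)
    (hfm : ∀ f : BFun, finitary f → Monotone f.2 → PresBot f → f ∈ F)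
    {g : (ℕ → Bool) → Bool} (hm : Monotone g)
    {N : ℕ} (hvan : ∀ x : ℕ → Bool, (∀ i < N, x i = false) → g x = false) (n : ℕ) (hn : N ≤ n) :
    (⟨none, fun x : ℕ → Bool => g (fun i => if i < n then x i else true)⟩ : BFun) ∈ F := by
  set g' : (Fin (n + 1) → Bool) → Bool :=
    fun s => g (fun i => if h : i < n then s ⟨i, by omega⟩ else true) with hg'
  have key : (fun x : ℕ → Bool => g' (fun j => x j.val))
      = (fun x : ℕ → Bool => g (fun i => if i < n then x i else true)) := by
    funext x
    refine congrArg g (funext fun i => ?_)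
    by_cases h : i < n <;> simp [hg', h]
  have hm' : Monotone g' := by
    intro s t hst
    apply hm
    intro i
    by_cases h : i < n
    · simp only [hg', dif_pos h]; exact hst _
    · simp only [hg', dif_neg h]; exact le_refl _
  have h0' : g' (fun _ => false) = false := by
    apply hvan
    intro i hi
    simp only [hg']
    rw [dif_pos (by omega : i < n)]
  have := compFin hF hfm g' hm' h0' none (fun j : Fin (n + 1) => j.val)
  rw [show (⟨none, fun x : ℕ → Bool => g (fun i => if i < n then x i else true)⟩ : BFun)
    = ⟨none, fun x : ℕ → Bool => g' (fun j => x j.val)⟩ from by rw [key]]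
  exact this

end Members

/-! ### Generating the infinitary witnesses -/

section Gen

variable {F : Set BFun}

lemma vanNat {g : (ℕ → Bool) → Bool} (h : ∃ S : Finset ℕ, VanB g S) :
    ∃ N, ∀ x : ℕ → Bool, (∀ i < N, x i = false) → g x = false := by
  obtain ⟨S, hS⟩ := h
  refine ⟨S.sup id + 1, fun x hx => hS x fun i hi => hx i ?_⟩
  have : i ≤ S.sup id := Finset.le_sup (f := id) hi
  omega

/-- From a non-increasing-continuous member, the clone contains `⋀`. -/
lemma bigAnd_mem (hF : IsClone F)
    (hfin : finRes F = {f | finitary f ∧ Monotone f.2 ∧ PresBot f})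
    {f : BFun} (hf : f ∈ F) (hni : ¬ IncrCont f) :
    (⟨none, bigAnd⟩ : BFun) ∈ F := by
  have hfm := hfm_of_finres hfin
  have hmono := F_mono hF hfin hf
  have hpb := F_presBot hF hfin hf
  obtain ⟨a, g⟩ := f
  cases a with
  | some n => exact absurd (rincr_of_fin hmono) hni
  | none =>
    rw [incr_iff, RIncr, not_and] at hni
    have h2 := hni hmono
    push_neg at h2
    obtain ⟨x, hx, hneS⟩ := h2
    have hne : (g fun i => decide (∃ q, x q i = true)) ≠ decide (∃ q, g (x q) = true) := hneS
    have hmg : Monotone g := hmono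
    have hles : ∀ q, x q ≤ (fun i => decide (∃ q', x q' i = true)) := by
      intro q i
      rw [Bool.le_iff_imp]
      intro h
      simp only [decide_eq_true_eq]
      exact ⟨q, h⟩
    have hkey : g (fun i => decide (∃ q, x q i = true)) = true ∧ ∀ q, g (x q) = false := by
      cases hrhs : decide (∃ q, g (x q) = true)
      · rw [decide_eq_false_iff_not] at hrhs
        constructor
        · cases hsup : g (fun i => decide (∃ q, x q i = true))
          · rw [hsup] at hne
            exfalso
            apply hne
            symm
            rw [decide_eq_false_iff_not]
            exact hrhs
          · rfl
        · exact fun q => bool_eq_false fun ht => hrhs ⟨q, ht⟩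
      · exfalso
        rw [decide_eq_true_eq] at hrhs
        obtain ⟨q, hq⟩ := hrhs
        have hsup : g (fun i => decide (∃ q', x q' i = true)) = true :=
          Bool.le_iff_imp.1 (hmg (hles q)) hq
        rw [hsup] at hne
        apply hne
        symm
        rw [decide_eq_true_eq]
        exact ⟨q, hq⟩
    set w : ℕ → (ℕ → Bool) → Bool := fun i =>
      if h : ∃ q, x q i = true then (fun u => decide (∀ j, j ≤ Nat.find h → u j = true))
      else (fun _ => false) with hw
    have hwmem : ∀ i, (⟨none, w i⟩ : BFun) ∈ F := by
      intro i
      by_cases h : ∃ q, x q i = true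
      · simp only [hw, dif_pos h]
        exact andUpTo_mem hF hfm (Nat.find h)
      · simp only [hw, dif_neg h]
        exact constFalse_mem hF hfm none
    have hcomp := hF.comp none none g w hf hwmem
    have keyfun : (fun u : ℕ → Bool => g (fun i => w i u)) = bigAnd := by
      funext u
      by_cases hu : ∀ j, u j = true
      · have harg : (fun i => w i u) = (fun i => decide (∃ q, x q i = true)) := by
          funext i
          by_cases h : ∃ q, x q i = true
          · simp only [hw, dif_pos h]
            have h1 : decide (∀ j, j ≤ Nat.find h → u j = true) = true := by
              simp only [decide_eq_true_eq]
              exact fun j _ => hu j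
            rw [h1]
            symm
            simp only [decide_eq_true_eq]
            exact h
          · simp only [hw, dif_neg h]
            symm
            rw [decide_eq_false_iff_not]
            exact h
        rw [harg, hkey.1]
        symm
        simp only [bigAnd, decide_eq_true_eq]
        exact hu
      · obtain ⟨m, hum, hlt⟩ : ∃ m, u m = false ∧ ∀ j < m, u j = true := by
          have hex : ∃ j, u j = false := by
            obtain ⟨j, hj⟩ := not_forall.1 hu
            exact ⟨j, bool_eq_false hj⟩
          refine ⟨Nat.find hex, Nat.find_spec hex, fun j hj => ?_⟩
          have := Nat.find_min hex hj
          cases hj' : u j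
          · exact absurd hj' this
          · rfl
        have hbig : bigAnd u = false := by
          simp only [bigAnd, decide_eq_false_iff_not]
          intro hall
          rw [hall m] at hum
          cases hum
        rw [hbig]
        cases m with
        | zero =>
          have harg : (fun i => w i u) = (fun _ => false) := by
            funext i
            by_cases h : ∃ q, x q i = true
            · simp only [hw, dif_pos h]
              rw [decide_eq_false_iff_not]
              intro hall
              have := hall 0 (Nat.zero_le _)
              rw [hum] at this
              cases this
            · simp only [hw, dif_neg h]
          rw [harg]
          exact hpb
        | succ m' =>
          have hkle : (fun i => w i u) ≤ x m' := by
            intro i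
            rw [Bool.le_iff_imp]
            intro hwi
            by_cases h : ∃ q, x q i = true
            · simp only [hw, dif_pos h, decide_eq_true_eq] at hwi
              have hlt2 : Nat.find h ≤ m' := by
                by_contra hc
                have h3 := hwi (m' + 1) (by omega)
                rw [hum] at h3
                cases h3
              exact Bool.le_iff_imp.1 (hx hlt2 i) (Nat.find_spec h)
            · simp only [hw, dif_neg h] at hwi
              cases hwi
          refine bool_eq_false fun ht => ?_
          have := Bool.le_iff_imp.1 (hmg hkle) ht
          rw [hkey.2 m'] at this
          cases this
    rw [show (⟨none, bigAnd⟩ : BFun) = ⟨none, fun u : ℕ → Bool => g (fun i => w i u)⟩ from by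
      rw [keyfun]]
    exact hcomp

/-- From a non-vanishing member, the clone contains `⋁`. -/
lemma bigOr_mem (hF : IsClone F)
    (hfin : finRes F = {f | finitary f ∧ Monotone f.2 ∧ PresBot f})
    {f : BFun} (hf : f ∈ F) (hnv : ¬ VanishNearBot f) :
    (⟨none, bigOr⟩ : BFun) ∈ F := by
  have hfm := hfm_of_finres hfin
  have hmono := F_mono hF hfin hf
  have hpb := F_presBot hF hfin hf
  obtain ⟨a, g⟩ := f
  cases a with
  | some n => exact absurd ((vanish_iff g).2 ⟨Finset.univ, vanB_univ hpb⟩) hnv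
  | none =>
    rw [vanishB_iff] at hnv
    push_neg at hnv
    have hmg : Monotone g := hmono
    have hz : ∀ N : ℕ, g (fun i => decide (N ≤ i)) = true := by
      intro N
      have h1 := hnv (Finset.range N)
      simp only [VanB] at h1
      push_neg at h1
      obtain ⟨x, hx1, hx2⟩ := h1
      have hle : x ≤ (fun i => decide (N ≤ i)) := by
        intro i
        rw [Bool.le_iff_imp]
        intro hxi
        simp only [decide_eq_true_eq]
        by_contra hc
        rw [hx1 i (Finset.mem_range.2 (by omega))] at hxi
        cases hxi
      have hgx : g x = true := by
        cases h : g x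
        · exact absurd h hx2
        · rfl
      exact Bool.le_iff_imp.1 (hmg hle) hgx
    have hcomp := hF.comp none none g
      (fun i u => decide (∃ j, j ≤ i ∧ u j = true)) hf
      (fun i => orUpTo_mem hF hfm i)
    have keyfun : (fun u : ℕ → Bool => g (fun i => decide (∃ j, j ≤ i ∧ u j = true)))
        = bigOr := by
      funext u
      by_cases hu : ∃ j, u j = true
      · have harg : (fun i => decide (∃ j, j ≤ i ∧ u j = true))
            = (fun i => decide (Nat.find hu ≤ i)) := by
          funext i
          rw [decide_eq_decide]
          constructor
          · rintro ⟨j, hj, hju⟩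
            exact le_trans (Nat.find_min' hu hju) hj
          · intro h
            exact ⟨Nat.find hu, h, Nat.find_spec hu⟩
        rw [harg, hz]
        symm
        simp only [bigOr, decide_eq_true_eq]
        exact hu
      · have harg : (fun i => decide (∃ j, j ≤ i ∧ u j = true)) = (fun _ : ℕ => false) := by
          funext i
          rw [decide_eq_false_iff_not]
          rintro ⟨j, -, hju⟩
          exact hu ⟨j, hju⟩
        rw [harg]
        have h2 : g (fun _ : ℕ => false) = false := hpb
        rw [h2]
        symm
        simp only [bigOr, decide_eq_false_iff_not]
        exact hu
    rw [show (⟨none, bigOr⟩ : BFun)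
      = ⟨none, fun u : ℕ → Bool => g (fun i => decide (∃ j, j ≤ i ∧ u j = true))⟩ from by
      rw [keyfun]]
    exact hcomp

/-- From a vanishing, non-decreasing-continuous member, the clone contains `g₀`. -/
lemma gzf_mem (hF : IsClone F)
    (hfin : finRes F = {f | finitary f ∧ Monotone f.2 ∧ PresBot f})
    {f : BFun} (hf : f ∈ F) (hnd : ¬ DecrCont f) (hv : VanishNearBot f) :
    (⟨none, gzf⟩ : BFun) ∈ F := by
  have hfm := hfm_of_finres hfin
  have hmono := F_mono hF hfin hf
  obtain ⟨a, g⟩ := f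
  cases a with
  | some n => exact absurd (rdecr_of_fin hmono) hnd
  | none =>
    have hmg : Monotone g := hmono
    obtain ⟨N, hvanN⟩ := vanNat ((vanish_iff g).1 hv)
    rw [decr_iff, RDecr, not_and] at hnd
    have h2 := hnd hmono
    push_neg at h2
    obtain ⟨x0, hx0, hneS⟩ := h2
    have hne : (g fun i => decide (∀ q, x0 q i = true)) ≠ decide (∀ q, g (x0 q) = true) := hneS
    have hges : ∀ q, (fun i => decide (∀ q', x0 q' i = true)) ≤ x0 q := by
      intro q i
      rw [Bool.le_iff_imp]
      intro h
      simp only [decide_eq_true_eq] at h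
      exact h q
    have hkey : g (fun i => decide (∀ q, x0 q i = true)) = false ∧ ∀ q, g (x0 q) = true := by
      cases hrhs : decide (∀ q, g (x0 q) = true)
      · exfalso
        rw [decide_eq_false_iff_not] at hrhs
        push_neg at hrhs
        obtain ⟨q, hq⟩ := hrhs
        have h3 : g (x0 q) = false := bool_eq_false hq
        have h4 : g (fun i => decide (∀ q', x0 q' i = true)) = false := by
          refine bool_eq_false fun ht => ?_
          have := Bool.le_iff_imp.1 (hmg (hges q)) ht
          rw [h3] at this
          cases this
        rw [h4] at hne
        apply hne
        symm
        rw [decide_eq_false_iff_not]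
        push_neg
        exact ⟨q, hq⟩
      · rw [decide_eq_true_eq] at hrhs
        refine ⟨?_, hrhs⟩
        cases hsup : g (fun i => decide (∀ q, x0 q i = true))
        · rfl
        · rw [hsup] at hne
          exfalso
          apply hne
          symm
          rw [decide_eq_true_eq]
          exact hrhs
    -- stabilize the first N coordinates
    have hrf : ∀ i, ∃ q, (decide (∀ q', x0 q' i = true) = false → x0 q i = false) := by
      intro i
      by_cases h : ∀ q', x0 q' i = true
      · exact ⟨0, fun hc => by simp [h] at hc⟩
      · obtain ⟨q, hq⟩ := not_forall.1 h
        exact ⟨q, fun _ => bool_eq_false hq⟩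
    choose rf hrfs using hrf
    set q0 := (Finset.range N).sup rf with hq0
    set x : ℕ → ℕ → Bool := fun q => x0 (q0 + q) with hxdef
    have hx : Antitone x := fun q q' hq => hx0 (by omega)
    set xinf : ℕ → Bool := fun i => decide (∀ q, x0 q i = true) with hxinf
    have hinfeq : (fun i => decide (∀ q, x q i = true)) = xinf := by
      funext i
      rw [hxinf, decide_eq_decide]
      constructor
      · intro h q
        exact Bool.le_iff_imp.1 (hx0 (by omega : q ≤ q0 + q) i) (h q)
      · intro h q
        exact h (q0 + q)
    have hallg : ∀ q, g (x q) = true := fun q => hkey.2 (q0 + q)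
    have hginf : g xinf = false := hkey.1
    have hpre : ∀ q i, i < N → x q i = xinf i := by
      intro q i hi
      cases hxi : xinf i
      · rw [hxinf] at hxi
        have h5 : x0 (rf i) i = false := hrfs i hxi
        refine bool_eq_false fun ht => ?_
        have hle : rf i ≤ q0 + q := by
          have : rf i ≤ q0 := Finset.le_sup (Finset.mem_range.2 hi)
          omega
        have := Bool.le_iff_imp.1 (hx0 hle i) ht
        rw [h5] at this
        cases this
      · rw [hxinf, decide_eq_true_eq] at hxi
        exact hxi (q0 + q)
    -- minimal failure times
    have hPex : ∀ i, xinf i = false → ∃ q, x q i = false := by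
      intro i hi
      by_contra hc
      push_neg at hc
      have : (fun i => decide (∀ q, x q i = true)) i = true := by
        simp only [decide_eq_true_eq]
        intro q
        cases h : x q i
        · exact absurd h (hc q)
        · rfl
      rw [hinfeq] at this
      rw [this] at hi
      cases hi
    set pfun : ℕ → ℕ := fun i => if h : ∃ q, x q i = false then Nat.find h else 0 with hpfun
    have hpA : ∀ i q, xinf i = false → x q i = true → q < pfun i := by
      intro i q hi hq
      have hex := hPex i hi
      rw [hpfun]
      simp only [dif_pos hex]
      by_contra hc
      have hfind : x (Nat.find hex) i = false := Nat.find_spec hex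
      have := Bool.le_iff_imp.1 (hx (by omega : Nat.find hex ≤ q) i) hq
      rw [hfind] at this
      cases this
    have hpB : ∀ i q, xinf i = false → q < pfun i → x q i = true := by
      intro i q hi hq
      have hex := hPex i hi
      rw [hpfun] at hq
      simp only [dif_pos hex] at hq
      have := Nat.find_min hex hq
      cases h : x q i
      · exact absurd h this
      · rfl
    -- the inner functions
    set w : ℕ → (ℕ → Bool) → Bool := fun i =>
      if xinf i = true then (fun u => u 0)
      else if i < N then (fun _ => false)
      else (fun u => decide (∃ j, j < pfun i ∧ u (j + 1) = true)) with hw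
    have hwmem : ∀ i, (⟨none, w i⟩ : BFun) ∈ F := by
      intro i
      by_cases h1 : xinf i = true
      · simp only [hw, if_pos h1]
        exact hF.proj none 0
      · by_cases h2 : i < N
        · simp only [hw, if_neg h1, if_pos h2]
          exact constFalse_mem hF hfm none
        · simp only [hw, if_neg h1, if_neg h2]
          exact orShift_mem hF hfm (pfun i)
    have hcomp := hF.comp none none g w hf hwmem
    have keyfun : (fun u : ℕ → Bool => g (fun i => w i u)) = gzf := by
      funext u
      by_cases hu0 : u 0 = true
      · by_cases hutail : ∃ j, u (j + 1) = true
        · obtain ⟨j0, hj0⟩ := hutail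
          have hle : x j0 ≤ (fun i => w i u) := by
            intro i
            rw [Bool.le_iff_imp]
            intro hxt
            by_cases h1 : xinf i = true
            · simp only [hw, if_pos h1]
              exact hu0
            · by_cases h2 : i < N
              · exfalso
                have := hpre j0 i h2
                rw [bool_eq_false h1] at this
                rw [this] at hxt
                cases hxt
              · simp only [hw, if_neg h1, if_neg h2, decide_eq_true_eq]
                exact ⟨j0, hpA i j0 (bool_eq_false h1) hxt, hj0⟩
          have hgv : g (fun i => w i u) = true :=
            Bool.le_iff_imp.1 (hmg hle) (hallg j0)
          rw [hgv]
          symm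
          simp only [gzf, decide_eq_true_eq]
          exact ⟨hu0, j0, hj0⟩
        · push_neg at hutail
          have harg : (fun i => w i u) = xinf := by
            funext i
            by_cases h1 : xinf i = true
            · simp only [hw, if_pos h1]
              rw [hu0, h1]
            · by_cases h2 : i < N
              · simp only [hw, if_neg h1, if_pos h2]
                exact (bool_eq_false h1).symm
              · simp only [hw, if_neg h1, if_neg h2]
                rw [bool_eq_false h1, decide_eq_false_iff_not]
                rintro ⟨j, -, hj⟩
                exact hutail j hj
          rw [harg, hginf]
          symm
          simp only [gzf, decide_eq_false_iff_not, not_and]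
          rintro - ⟨j, hj⟩
          exact hutail j hj
      · have hgv : g (fun i => w i u) = false := by
          apply hvanN
          intro i hi
          by_cases h1 : xinf i = true
          · simp only [hw, if_pos h1]
            exact bool_eq_false hu0
          · simp only [hw, if_neg h1, if_pos hi]
        rw [hgv]
        symm
        simp only [gzf, decide_eq_false_iff_not, not_and]
        intro h
        exact absurd h hu0
    rw [show (⟨none, gzf⟩ : BFun) = ⟨none, fun u : ℕ → Bool => g (fun i => w i u)⟩ from by
      rw [keyfun]]
    exact hcomp

end Gen

/-! ### Generating whole classes -/

section Upper

variable {F : Set BFun}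

lemma decide_bool (b : Bool) : decide (b = true) = b := by cases b <;> simp

lemma posMem (hF : IsClone F)
    (hfm : ∀ f : BFun, finitary f → Monotone f.2 → PresBot f → f ∈ F)
    (hOr : (⟨none, bigOr⟩ : BFun) ∈ F) (hAnd : (⟨none, bigAnd⟩ : BFun) ∈ F) :
    ∀ S : Set (ℕ → Bool), PosSet S → ∀ gg : (ℕ → Bool) → Bool,
      (∀ x, gg x = true ↔ x ∈ S) → (⟨none, gg⟩ : BFun) ∈ F := by
  intro S hS
  induction hS with
  | basic i =>
    intro gg hgg
    rw [show (⟨none, gg⟩ : BFun) = ⟨none, fun x : ℕ → Bool => x i⟩ from by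
      congr 1
      funext x
      cases h : x i
      · refine bool_eq_false fun ht => ?_
        have := (hgg x).1 ht
        rw [mem_setOf_eq] at this
        rw [h] at this
        cases this
      · exact (hgg x).2 h]
    exact hF.proj none i
  | iUnion S hSn ih =>
    intro gg hgg
    have hin : ∀ n, (⟨none, fun x : ℕ → Bool => decide (x ∈ S n)⟩ : BFun) ∈ F :=
      fun n => ih n _ (fun x => by rw [decide_eq_true_eq])
    have hcomp := hF.comp none none bigOr (fun n (x : ℕ → Bool) => decide (x ∈ S n)) hOr hin
    rw [show (⟨none, gg⟩ : BFun)
        = ⟨none, fun x : ℕ → Bool => bigOr (fun n => decide (x ∈ S n))⟩ from by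
      congr 1
      funext x
      have hR : bigOr (fun n => decide (x ∈ S n)) = decide (x ∈ ⋃ n, S n) := by
        simp only [bigOr]
        rw [decide_eq_decide]
        simp only [decide_eq_true_eq, mem_iUnion]
      rw [hR]
      cases h : gg x
      · symm
        rw [decide_eq_false_iff_not]
        intro hm
        have := (hgg x).2 hm
        rw [h] at this
        cases this
      · symm
        rw [decide_eq_true_eq]
        exact (hgg x).1 h]
    exact hcomp
  | iInter S hSn ih =>
    intro gg hgg
    have hin : ∀ n, (⟨none, fun x : ℕ → Bool => decide (x ∈ S n)⟩ : BFun) ∈ F :=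
      fun n => ih n _ (fun x => by rw [decide_eq_true_eq])
    have hcomp := hF.comp none none bigAnd (fun n (x : ℕ → Bool) => decide (x ∈ S n)) hAnd hin
    rw [show (⟨none, gg⟩ : BFun)
        = ⟨none, fun x : ℕ → Bool => bigAnd (fun n => decide (x ∈ S n))⟩ from by
      congr 1
      funext x
      have hR : bigAnd (fun n => decide (x ∈ S n)) = decide (x ∈ ⋂ n, S n) := by
        simp only [bigAnd]
        rw [decide_eq_decide]
        simp only [decide_eq_true_eq, mem_iInter]
      rw [hR]
      cases h : gg x
      · symm
        rw [decide_eq_false_iff_not]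
        intro hm
        have := (hgg x).2 hm
        rw [h] at this
        cases this
      · symm
        rw [decide_eq_true_eq]
        exact (hgg x).1 h]
    exact hcomp

lemma const_case (hF : IsClone F)
    (hfm : ∀ f : BFun, finitary f → Monotone f.2 → PresBot f → f ∈ F)
    {g : (ℕ → Bool) → Bool} (h : ∀ x, g x = false) : (⟨none, g⟩ : BFun) ∈ F := by
  rw [show (⟨none, g⟩ : BFun) = ⟨none, fun _ : ℕ → Bool => false⟩ from by
    congr 1; funext x; exact h x]
  exact constFalse_mem hF hfm none

lemma N1_sub_F (hF : IsClone F)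
    (hfin : finRes F = {f | finitary f ∧ Monotone f.2 ∧ PresBot f})
    (hOr : (⟨none, bigOr⟩ : BFun) ∈ F) (hAnd : (⟨none, bigAnd⟩ : BFun) ∈ F) :
    N1 ⊆ F := by
  have hfm := hfm_of_finres hfin
  rintro ⟨a, g⟩ ⟨hB, hm, h0⟩
  cases a with
  | some n => exact hfm _ (fun h => nomatch h) hm h0
  | none =>
    by_cases hne : ∃ x : ℕ → Bool, g x = true
    · have hpos : PosSet {x | g x = true} := by
        refine posSet_of_borel_monotone hB ?_ ⟨hne.choose, hne.choose_spec⟩ ?_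
        · intro x y hxy hx
          exact Bool.le_iff_imp.1 (hm hxy) hx
        · intro hmem
          have h0' : g (fun _ => false) = false := h0
          rw [mem_setOf_eq, h0'] at hmem
          cases hmem
      exact posMem hF hfm hOr hAnd _ hpos g (fun x => Iff.rfl)
    · push_neg at hne
      exact const_case hF hfm fun x => bool_eq_false (hne x)

lemma N2_sub_F (hF : IsClone F)
    (hfin : finRes F = {f | finitary f ∧ Monotone f.2 ∧ PresBot f})
    (hOr : (⟨none, bigOr⟩ : BFun) ∈ F) : N2 ⊆ F := by
  have hfm := hfm_of_finres hfin
  rintro ⟨a, g⟩ ⟨hB, hI, h0⟩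
  cases a with
  | some n => exact hfm _ (fun h => nomatch h) hI.1 h0
  | none =>
    have hmg : Monotone g := hI.1
    have h0' : g (fun _ => false) = false := h0
    have hcomp := hF.comp none none bigOr
      (fun n x => g (fun i => if i < n then x i else false)) hOr
      (fun n => trunc0_mem hF hfm hmg h0' n)
    rw [show (⟨none, g⟩ : BFun)
        = ⟨none, fun x : ℕ → Bool => bigOr (fun n => g (fun i => if i < n then x i else false))⟩
        from ?_]
    · exact hcomp
    congr 1
    funext x
    have hy : Monotone (fun n : ℕ => fun i : ℕ => if i < n then x i else false) := by
      intro n n' hn i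
      show (if i < n then x i else false) ≤ (if i < n' then x i else false)
      by_cases h : i < n
      · rw [if_pos h, if_pos (by omega : i < n')]
      · rw [if_neg h]; exact Bool.false_le _
    have hident : (fun i => decide (∃ n, (if i < n then x i else false) = true)) = x := by
      funext i
      cases hxi : x i
      · rw [decide_eq_false_iff_not]
        rintro ⟨n, hn⟩
        by_cases h : i < n
        · rw [if_pos h] at hn; cases hn
        · rw [if_neg h] at hn; cases hn
      · rw [decide_eq_true_eq]
        exact ⟨i + 1, by rw [if_pos (Nat.lt_succ_self i)]⟩
    have hsup : g (fun i => decide (∃ n, (if i < n then x i else false) = true))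
        = decide (∃ n, g (fun i => if i < n then x i else false) = true) := hI.2 _ hy
    rw [hident] at hsup
    rw [hsup]
    rfl

lemma N5_sub_F (hF : IsClone F)
    (hfin : finRes F = {f | finitary f ∧ Monotone f.2 ∧ PresBot f})
    (hAnd : (⟨none, bigAnd⟩ : BFun) ∈ F) : N5 ⊆ F := by
  have hfm := hfm_of_finres hfin
  rintro ⟨a, g⟩ ⟨hB, hD, h0⟩
  cases a with
  | some n => exact hfm _ (fun h => nomatch h) hD.1 h0
  | none =>
    have hmg : Monotone g := hD.1
    have h0' : g (fun _ => false) = false := h0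
    obtain ⟨N, hvanN0⟩ := vanNat (rdecr_vanish hD h0')
    have hvanN : ∀ x : ℕ → Bool, (∀ i < N, x i = false) → g x = false := hvanN0
    have hcomp := hF.comp none none bigAnd
      (fun n x => g (fun i => if i < N + n then x i else true)) hAnd
      (fun n => trunc1_mem hF hfm hmg hvanN (N + n) (by omega))
    rw [show (⟨none, g⟩ : BFun)
        = ⟨none, fun x : ℕ → Bool => bigAnd (fun n => g (fun i => if i < N + n then x i else true))⟩
        from ?_]
    · exact hcomp
    congr 1
    funext x
    have hy : Antitone (fun n : ℕ => fun i : ℕ => if i < N + n then x i else true) := by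
      intro n n' hn i
      show (if i < N + n' then x i else true) ≤ (if i < N + n then x i else true)
      by_cases h : i < N + n
      · rw [if_pos h, if_pos (by omega : i < N + n')]
      · rw [if_neg h]; exact Bool.le_true _
    have hident : (fun i => decide (∀ n, (if i < N + n then x i else true) = true)) = x := by
      funext i
      cases hxi : x i
      · rw [decide_eq_false_iff_not]
        intro hall
        have := hall (i + 1)
        rw [if_pos (by omega : i < N + (i + 1))] at this
        cases this
      · rw [decide_eq_true_eq]
        intro n
        by_cases h : i < N + n <;> simp [h]
    have hinf : g (fun i => decide (∀ n, (if i < N + n then x i else true) = true))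
        = decide (∀ n, g (fun i => if i < N + n then x i else true) = true) := hD.2 _ hy
    rw [hident] at hinf
    rw [hinf]
    rfl

lemma N4_sub_F (hF : IsClone F)
    (hfin : finRes F = {f | finitary f ∧ Monotone f.2 ∧ PresBot f})
    (hgz : (⟨none, gzf⟩ : BFun) ∈ F) : N4 ⊆ F := by
  have hfm := hfm_of_finres hfin
  rintro ⟨a, g⟩ ⟨hB, hI, hv⟩
  cases a with
  | some n =>
    exact hfm _ (fun h => nomatch h) hI.1 (vanish_presBot (f := ⟨some n, g⟩) hv)
  | none =>
    have hmg : Monotone g := hI.1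
    obtain ⟨N, hvanN⟩ := vanNat ((vanish_iff g).1 hv)
    cases N with
    | zero => exact const_case hF hfm fun x => hvanN x (fun i hi => absurd hi (by omega))
    | succ N' =>
      have h0' : g (fun _ => false) = false := hvanN _ (fun _ _ => rfl)
      set w : ℕ → (ℕ → Bool) → Bool := fun k =>
        if k = 0 then (fun u => decide (∃ j, j ≤ N' ∧ u j = true))
        else (fun x => g (fun i => if i < k - 1 then x i else false)) with hw
      have hwmem : ∀ k, (⟨none, w k⟩ : BFun) ∈ F := by
        intro k
        cases k with
        | zero => simp only [hw, if_pos rfl]; exact orUpTo_mem hF hfm N'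
        | succ k' =>
          simp only [hw, if_neg (Nat.succ_ne_zero k')]
          exact trunc0_mem hF hfm hmg h0' (k' + 1 - 1)
      have hcomp := hF.comp none none gzf w hgz hwmem
      rw [show (⟨none, g⟩ : BFun) = ⟨none, fun x : ℕ → Bool => gzf (fun k => w k x)⟩ from ?_]
      · exact hcomp
      congr 1
      funext x
      have hy : Monotone (fun n : ℕ => fun i : ℕ => if i < n then x i else false) := by
        intro n n' hn i
        show (if i < n then x i else false) ≤ (if i < n' then x i else false)
        by_cases h : i < n
        · rw [if_pos h, if_pos (by omega : i < n')]
        · rw [if_neg h]; exact Bool.false_le _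
      have hident : (fun i => decide (∃ n, (if i < n then x i else false) = true)) = x := by
        funext i
        cases hxi : x i
        · rw [decide_eq_false_iff_not]
          rintro ⟨n, hn⟩
          by_cases h : i < n
          · rw [if_pos h] at hn; cases hn
          · rw [if_neg h] at hn; cases hn
        · rw [decide_eq_true_eq]
          exact ⟨i + 1, by rw [if_pos (Nat.lt_succ_self i)]⟩
      have hsup : g (fun i => decide (∃ n, (if i < n then x i else false) = true))
          = decide (∃ n, g (fun i => if i < n then x i else false) = true) := hI.2 _ hy
      rw [hident] at hsup
      have hw0 : w 0 x = decide (∃ j, j ≤ N' ∧ x j = true) := by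
        simp only [hw, if_pos rfl]
      have hwk : ∀ k, w (k + 1) x = g (fun i => if i < k then x i else false) := by
        intro k
        simp only [hw, if_neg (Nat.succ_ne_zero k)]
        rfl
      show g x = gzf (fun k => w k x)
      simp only [gzf]
      cases hgx : g x
      · rw [eq_comm, decide_eq_false_iff_not, not_and]
        rintro - ⟨i, hi⟩
        rw [hwk i] at hi
        have hle : (fun j => if j < i then x j else false) ≤ x := by
          intro j
          show (if j < i then x j else false) ≤ x j
          by_cases h : j < i
          · rw [if_pos h]
          · rw [if_neg h]; exact Bool.false_le _
        have := Bool.le_iff_imp.1 (hmg hle) hi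
        rw [hgx] at this
        cases this
      · rw [eq_comm, decide_eq_true_eq]
        constructor
        · rw [hw0, decide_eq_true_eq]
          by_contra hc
          push_neg at hc
          have hgf : g x = false := by
            apply hvanN
            intro i hi
            exact bool_eq_false (hc i (by omega))
          rw [hgx] at hgf
          cases hgf
        · have h1 : decide (∃ n, g (fun i => if i < n then x i else false) = true) = true := by
            rw [← hsup, hgx]
          rw [decide_eq_true_eq] at h1
          obtain ⟨n, hn⟩ := h1
          exact ⟨n, by rw [hwk n]; exact hn⟩

end Upper

/-! ### Guarded generation for `N3` -/

section Guard

variable {F : Set BFun}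

lemma decide_eq_bool' {p : Prop} {inst : Decidable p} {b : Bool} (h : p ↔ b = true) :
    @decide p inst = b := by
  cases b
  · exact decide_eq_false (fun hp => by cases h.1 hp)
  · exact decide_eq_true (h.2 rfl)

/-- The guarded characteristic function of `S`. -/
noncomputable def guardF (N' : ℕ) (S : Set (ℕ → Bool)) : (ℕ → Bool) → Bool :=
  fun u => decide ((∃ j, j ≤ N' ∧ u j = true) ∧ u ∈ S)

lemma posMem_guard (hF : IsClone F)
    (hfm : ∀ f : BFun, finitary f → Monotone f.2 → PresBot f → f ∈ F) (N' : ℕ)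
    (hgz : (⟨none, gzf⟩ : BFun) ∈ F) (hAnd : (⟨none, bigAnd⟩ : BFun) ∈ F) :
    ∀ S : Set (ℕ → Bool), PosSet S → (⟨none, guardF N' S⟩ : BFun) ∈ F := by
  intro S hS
  induction hS with
  | basic i =>
    set M := max N' i with hM
    have hiM : i < M + 1 := by omega
    set g' : (Fin (M + 1) → Bool) → Bool :=
      fun s => decide ((∃ j : Fin (M + 1), j.val ≤ N' ∧ s j = true) ∧ s ⟨i, hiM⟩ = true) with hg'
    have hm' : Monotone g' := by
      intro s t hst
      rw [Bool.le_iff_imp]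
      simp only [hg', decide_eq_true_eq]
      rintro ⟨⟨j, hj, hsj⟩, hsi⟩
      exact ⟨⟨j, hj, Bool.le_iff_imp.1 (hst j) hsj⟩, Bool.le_iff_imp.1 (hst _) hsi⟩
    have h0' : g' (fun _ => false) = false := by
      simp [hg']
    have hmem := compFin hF hfm g' hm' h0' none (fun j : Fin (M + 1) => j.val)
    rw [show (⟨none, guardF N' {x : ℕ → Bool | x i = true}⟩ : BFun)
        = ⟨none, fun x : ℕ → Bool => g' (fun j => x j.val)⟩ from by
      congr 1
      funext x
      simp only [guardF, hg']
      rw [decide_eq_decide]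
      constructor
      · rintro ⟨⟨j, hj, hxj⟩, hxi⟩
        exact ⟨⟨⟨j, by omega⟩, hj, hxj⟩, hxi⟩
      · rintro ⟨⟨j, hj, hxj⟩, hxi⟩
        exact ⟨⟨j.val, hj, hxj⟩, hxi⟩]
    exact hmem
  | iUnion S hSn ih =>
    set w : ℕ → (ℕ → Bool) → Bool := fun k =>
      if k = 0 then (fun u => decide (∃ j, j ≤ N' ∧ u j = true))
      else guardF N' (S (k - 1)) with hw
    have hwmem : ∀ k, (⟨none, w k⟩ : BFun) ∈ F := by
      intro k
      cases k with
      | zero => simp only [hw, if_pos rfl]; exact orUpTo_mem hF hfm N'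
      | succ k' =>
        simp only [hw, if_neg (Nat.succ_ne_zero k')]
        exact ih k'
    have hcomp := hF.comp none none gzf w hgz hwmem
    rw [show (⟨none, guardF N' (⋃ n, S n)⟩ : BFun)
        = ⟨none, fun u : ℕ → Bool => gzf (fun k => w k u)⟩ from ?_]
    · exact hcomp
    congr 1
    funext u
    have hw0 : w 0 u = decide (∃ j, j ≤ N' ∧ u j = true) := by simp only [hw, if_pos rfl]
    have hwk : ∀ k, w (k + 1) u = guardF N' (S k) u := by
      intro k
      simp only [hw, if_neg (Nat.succ_ne_zero k)]
      rfl
    show guardF N' (⋃ n, S n) u = gzf (fun k => w k u)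
    simp only [gzf, guardF]
    rw [decide_eq_decide]
    constructor
    · rintro ⟨hA, hm⟩
      rw [mem_iUnion] at hm
      obtain ⟨n, hn⟩ := hm
      refine ⟨by rw [hw0, decide_eq_true_eq]; exact hA, ⟨n, ?_⟩⟩
      rw [hwk n]
      simp only [guardF, decide_eq_true_eq]
      exact ⟨hA, hn⟩
    · rintro ⟨h0, i, hi⟩
      rw [hw0, decide_eq_true_eq] at h0
      rw [hwk i] at hi
      simp only [guardF, decide_eq_true_eq] at hi
      exact ⟨h0, mem_iUnion.2 ⟨i, hi.2⟩⟩
  | iInter S hSn ih =>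
    set and2 : (Fin 2 → Bool) → Bool := fun s => s 0 && s 1 with hand2
    have hand2mem : (⟨some 2, and2⟩ : BFun) ∈ F := by
      refine hfm _ (fun h => nomatch h) ?_ (by simp [PresBot, hand2])
      intro s t hst
      rw [Bool.le_iff_imp]
      simp only [hand2, Bool.and_eq_true]
      rintro ⟨h1, h2⟩
      exact ⟨Bool.le_iff_imp.1 (hst 0) h1, Bool.le_iff_imp.1 (hst 1) h2⟩
    set w2 : Fin 2 → (ℕ → Bool) → Bool := fun j =>
      if j.val = 0 then (fun u => decide (∃ j', j' ≤ N' ∧ u j' = true))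
      else (fun u => bigAnd (fun n => guardF N' (S n) u)) with hw2
    have hw2mem : ∀ j, (⟨none, w2 j⟩ : BFun) ∈ F := by
      intro j
      by_cases h : j.val = 0
      · simp only [hw2, if_pos h]
        exact orUpTo_mem hF hfm N'
      · simp only [hw2, if_neg h]
        exact hF.comp none none bigAnd (fun n => guardF N' (S n)) hAnd ih
    have hcomp := hF.comp (some 2) none and2 w2 hand2mem hw2mem
    rw [show (⟨none, guardF N' (⋂ n, S n)⟩ : BFun)
        = ⟨none, fun u : ℕ → Bool => and2 (fun j => w2 j u)⟩ from ?_]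
    · exact hcomp
    congr 1
    funext u
    have hv0 : w2 0 u = decide (∃ j', j' ≤ N' ∧ u j' = true) := by
      simp only [hw2]
      rw [if_pos (show ((0 : Fin 2)).val = 0 from rfl)]
    have hv1 : w2 1 u = bigAnd (fun n => guardF N' (S n) u) := by
      simp only [hw2]
      rw [if_neg (show ¬ ((1 : Fin 2)).val = 0 from by decide)]
    show guardF N' (⋂ n, S n) u = and2 (fun j => w2 j u)
    have hred : and2 (fun j => w2 j u) = (w2 0 u && w2 1 u) := rfl
    rw [hred, hv0, hv1]
    cases hA : decide (∃ j', j' ≤ N' ∧ u j' = true)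
    · rw [Bool.false_and]
      rw [decide_eq_false_iff_not] at hA
      simp only [guardF, decide_eq_false_iff_not]
      rintro ⟨hP, -⟩
      exact hA hP
    · rw [Bool.true_and]
      rw [decide_eq_true_eq] at hA
      simp only [guardF, bigAnd]
      refine decide_eq_decide.mpr ?_
      constructor
      · rintro ⟨-, hm⟩
        intro n
        rw [decide_eq_true_eq]
        exact ⟨hA, mem_iInter.1 hm n⟩
      · intro h
        refine ⟨hA, mem_iInter.2 fun n => ?_⟩
        have := h n
        rw [decide_eq_true_eq] at this
        exact this.2

lemma N3_sub_F (hF : IsClone F)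
    (hfin : finRes F = {f | finitary f ∧ Monotone f.2 ∧ PresBot f})
    (hgz : (⟨none, gzf⟩ : BFun) ∈ F) (hAnd : (⟨none, bigAnd⟩ : BFun) ∈ F) : N3 ⊆ F := by
  have hfm := hfm_of_finres hfin
  rintro ⟨a, g⟩ ⟨hB, hm, hv⟩
  cases a with
  | some n =>
    exact hfm _ (fun h => nomatch h) hm (vanish_presBot (f := ⟨some n, g⟩) hv)
  | none =>
    obtain ⟨N, hvanN⟩ := vanNat ((vanish_iff g).1 hv)
    cases N with
    | zero => exact const_case hF hfm fun x => hvanN x (fun i hi => absurd hi (by omega))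
    | succ N' =>
      by_cases hne : ∃ x : ℕ → Bool, g x = true
      · have h0' : g (fun _ => false) = false := hvanN _ (fun _ _ => rfl)
        have hpos : PosSet {x | g x = true} := by
          refine posSet_of_borel_monotone hB ?_ ⟨hne.choose, hne.choose_spec⟩ ?_
          · intro x y hxy hx
            exact Bool.le_iff_imp.1 (hm hxy) hx
          · intro hmem
            rw [mem_setOf_eq, h0'] at hmem
            cases hmem
        have := posMem_guard hF hfm N' hgz hAnd _ hpos
        rw [show (⟨none, g⟩ : BFun) = ⟨none, guardF N' {x | g x = true}⟩ from ?_]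
        · exact this
        congr 1
        funext x
        symm
        unfold guardF
        refine decide_eq_bool' ?_
        constructor
        · rintro ⟨-, hx⟩
          exact hx
        · intro hgx
          refine ⟨?_, hgx⟩
          by_contra hc
          push_neg at hc
          have hfa : g x = false := hvanN x (fun i hi => bool_eq_false (fun ht => by
            have := hc i (by omega)
            rw [ht] at this
            exact this rfl))
          rw [hgx] at hfa
          cases hfa
      · push_neg at hne
        exact const_case hF hfm fun x => bool_eq_false (hne x)

end Guard

/-- Increasing- and decreasing-continuity together imply topological continuity. -/
lemma cont_of_incr_decr {g : (ℕ → Bool) → Bool} (hi : RIncr g) (hd : RDecr g) :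
    Continuous g := by
  have hmg := hi.1
  have htrue : IsOpen {x : ℕ → Bool | g x = true} := by
    rw [isOpen_iff_forall_mem_open]
    intro x hx
    have hy : Monotone (fun n : ℕ => fun i : ℕ => if i < n then x i else false) := by
      intro n n' hn i
      show (if i < n then x i else false) ≤ (if i < n' then x i else false)
      by_cases h : i < n
      · rw [if_pos h, if_pos (by omega : i < n')]
      · rw [if_neg h]; exact Bool.false_le _
    have hident : (fun i => decide (∃ n, (if i < n then x i else false) = true)) = x := by
      funext i
      cases hxi : x i
      · rw [decide_eq_false_iff_not]
        rintro ⟨n, hn⟩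
        by_cases h : i < n
        · rw [if_pos h] at hn; cases hn
        · rw [if_neg h] at hn; cases hn
      · rw [decide_eq_true_eq]
        exact ⟨i + 1, by rw [if_pos (Nat.lt_succ_self i)]⟩
    have hsup : g (fun i => decide (∃ n, (if i < n then x i else false) = true))
        = decide (∃ n, g (fun i => if i < n then x i else false) = true) := hi.2 _ hy
    rw [hident] at hsup
    have hgx : g x = true := hx
    rw [hgx] at hsup
    symm at hsup
    rw [decide_eq_true_eq] at hsup
    obtain ⟨n0, hn0⟩ := hsup
    refine ⟨{z | ∀ i ∈ Finset.range n0, z i = x i}, ?_, isOpen_agree x _, fun i _ => rfl⟩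
    intro z hz
    show g z = true
    refine Bool.le_iff_imp.1 (hmg ?_) hn0
    intro i
    show (if i < n0 then x i else false) ≤ z i
    rw [Bool.le_iff_imp]
    intro ht
    by_cases h : i < n0
    · rw [if_pos h] at ht
      rw [hz i (Finset.mem_range.2 h)]
      exact ht
    · rw [if_neg h] at ht
      cases ht
  have hfalse : IsOpen {x : ℕ → Bool | g x = false} := by
    rw [isOpen_iff_forall_mem_open]
    intro x hx
    have hy : Antitone (fun n : ℕ => fun i : ℕ => if i < n then x i else true) := by
      intro n n' hn i
      show (if i < n' then x i else true) ≤ (if i < n then x i else true)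
      by_cases h : i < n
      · rw [if_pos h, if_pos (by omega : i < n')]
      · rw [if_neg h]; exact Bool.le_true _
    have hident : (fun i => decide (∀ n, (if i < n then x i else true) = true)) = x := by
      funext i
      cases hxi : x i
      · rw [decide_eq_false_iff_not]
        intro hall
        have := hall (i + 1)
        rw [if_pos (Nat.lt_succ_self i)] at this
        cases this
      · rw [decide_eq_true_eq]
        intro n
        by_cases h : i < n <;> simp [h]
    have hinf : g (fun i => decide (∀ n, (if i < n then x i else true) = true))
        = decide (∀ n, g (fun i => if i < n then x i else true) = true) := hd.2 _ hy
    rw [hident] at hinf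
    have hgx : g x = false := hx
    rw [hgx] at hinf
    symm at hinf
    rw [decide_eq_false_iff_not] at hinf
    push_neg at hinf
    obtain ⟨n0, hn0⟩ := hinf
    have hn0' : g (fun i => if i < n0 then x i else true) = false := bool_eq_false hn0
    refine ⟨{z | ∀ i ∈ Finset.range n0, z i = x i}, ?_, isOpen_agree x _, fun i _ => rfl⟩
    intro z hz
    show g z = false
    refine bool_eq_false fun ht => ?_
    have hle : z ≤ (fun i => if i < n0 then x i else true) := by
      intro i
      show z i ≤ (if i < n0 then x i else true)
      rw [Bool.le_iff_imp]
      intro hzi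
      by_cases h : i < n0
      · rw [if_pos h, ← hz i (Finset.mem_range.2 h)]
        exact hzi
      · rw [if_neg h]
    have := Bool.le_iff_imp.1 (hmg hle) ht
    rw [hn0'] at this
    cases this
  refine IsLocallyConstant.continuous (fun s => ?_)
  by_cases h1 : true ∈ s <;> by_cases h2 : false ∈ s
  · have : g ⁻¹' s = univ := by
      refine eq_univ_of_forall fun z => ?_
      rw [mem_preimage]
      cases hz : g z
      · exact h2
      · exact h1
    rw [this]; exact isOpen_univ
  · have : g ⁻¹' s = {x | g x = true} := by
      ext z
      rw [mem_preimage, mem_setOf_eq]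
      cases hz : g z
      · exact iff_of_false h2 (by simp)
      · exact iff_of_true h1 rfl
    rw [this]; exact htrue
  · have : g ⁻¹' s = {x | g x = false} := by
      ext z
      rw [mem_preimage, mem_setOf_eq]
      cases hz : g z
      · exact iff_of_true h2 rfl
      · exact iff_of_false h1 (by simp)
    rw [this]; exact hfalse
  · have : g ⁻¹' s = ∅ := by
      refine eq_empty_of_forall_notMem fun z hz => ?_
      rw [mem_preimage] at hz
      cases hzz : g z
      · rw [hzz] at hz; exact h2 hz
      · rw [hzz] at hz; exact h1 hz
    rw [this]; exact isOpen_empty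

/-! ### Membership facts for the witnesses -/

lemma cont_presBot_vanish {f : BFun} (hc : IsContFun f) (h0 : PresBot f) : VanishNearBot f := by
  have hcl : IsClosed {x | f.2 x = true} := by
    have : {x | f.2 x = true} = f.2 ⁻¹' {true} := by ext z; simp
    rw [this]
    exact (isClosed_discrete _).preimage hc
  rw [VanishNearBot, hcl.closure_eq]
  intro hmem
  rw [mem_setOf_eq, h0] at hmem
  cases hmem

theorem decr_presBot_vanish : ∀ f : BFun, DecrCont f → PresBot f → VanishNearBot f := by
  rintro ⟨a, g⟩ hd hp
  cases a with
  | some n => exact (vanish_iff g).2 ⟨Finset.univ, vanB_univ hp⟩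
  | none => exact (vanish_iff g).2 (rdecr_vanish hd hp)

lemma or_N1 : (⟨none, bigOr⟩ : BFun) ∈ N1 := ⟨bor_borel, bor_mono, bor_presBot⟩
lemma or_N2 : (⟨none, bigOr⟩ : BFun) ∈ N2 := ⟨bor_borel, bor_rincr, bor_presBot⟩
lemma or_not_vanish : ¬ VanishNearBot (⟨none, bigOr⟩ : BFun) := fun h =>
  bor_not_vanishB ((vanishB_iff _).1 h)
lemma or_not_N3 : (⟨none, bigOr⟩ : BFun) ∉ N3 := fun h => or_not_vanish h.2.2
lemma or_not_N4 : (⟨none, bigOr⟩ : BFun) ∉ N4 := fun h => or_not_vanish h.2.2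
lemma or_not_N5 : (⟨none, bigOr⟩ : BFun) ∉ N5 := fun h =>
  or_not_vanish (decr_presBot_vanish _ h.2.1 h.2.2)
lemma or_not_N6 : (⟨none, bigOr⟩ : BFun) ∉ N6 := fun h =>
  or_not_vanish (cont_presBot_vanish h.1 h.2.2)

lemma band_vanB : VanB bigAnd ({0} : Finset ℕ) := by
  intro x hx
  simp only [bigAnd, decide_eq_false_iff_not]
  intro h
  have := h 0
  rw [hx 0 (Finset.mem_singleton_self 0)] at this
  cases this

lemma and_N1 : (⟨none, bigAnd⟩ : BFun) ∈ N1 := ⟨band_borel, band_mono, band_presBot⟩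
lemma and_N3 : (⟨none, bigAnd⟩ : BFun) ∈ N3 :=
  ⟨band_borel, band_mono, (vanish_iff _).2 ⟨{0}, band_vanB⟩⟩
lemma and_N5 : (⟨none, bigAnd⟩ : BFun) ∈ N5 := ⟨band_borel, band_rdecr, band_presBot⟩
lemma and_not_N2 : (⟨none, bigAnd⟩ : BFun) ∉ N2 := fun h => band_not_rincr h.2.1
lemma and_not_N4 : (⟨none, bigAnd⟩ : BFun) ∉ N4 := fun h => band_not_rincr h.2.1
lemma and_not_N6 : (⟨none, bigAnd⟩ : BFun) ∉ N6 := fun h =>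
  band_not_rincr (rincr_of_continuous _ h.1 h.2.1)

lemma gz_N3 : (⟨none, gzf⟩ : BFun) ∈ N3 :=
  ⟨gzf_borel, gzf_mono, (vanish_iff _).2 ⟨{0}, gzf_vanB⟩⟩
lemma gz_N4 : (⟨none, gzf⟩ : BFun) ∈ N4 :=
  ⟨gzf_borel, gzf_rincr, (vanish_iff _).2 ⟨{0}, gzf_vanB⟩⟩
lemma gz_not_N5 : (⟨none, gzf⟩ : BFun) ∉ N5 := fun h => gzf_not_rdecr h.2.1
lemma gz_not_N6 : (⟨none, gzf⟩ : BFun) ∉ N6 := fun h =>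
  gzf_not_rdecr (rdecr_of_continuous _ h.1 h.2.1)

lemma ne_of_wit {X Y : Set BFun} (w : BFun) (hw : w ∈ X) (hn : w ∉ Y) : X ≠ Y :=
  fun h => hn (h ▸ hw)

/-! ### The classification -/

theorem classify (F : Set BFun) (hF : IsClone F) (hB : F ⊆ BorelClass)
    (hfin : finRes F = {f | finitary f ∧ Monotone f.2 ∧ PresBot f}) :
    F = N1 ∨ F = N2 ∨ F = N3 ∨ F = N4 ∨ F = N5 ∨ F = N6 := by
  have hFmono : ∀ f ∈ F, Monotone f.2 := fun f hf => F_mono hF hfin hf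
  have hFpb : ∀ f ∈ F, PresBot f := fun f hf => F_presBot hF hfin hf
  have hFborel : ∀ f ∈ F, IsBorelFun f := fun f hf => hB hf
  by_cases hQ : ∃ f ∈ F, ¬ VanishNearBot f
  · obtain ⟨f0, hf0, hnv⟩ := hQ
    have hOr := bigOr_mem hF hfin hf0 hnv
    by_cases hP : ∃ f ∈ F, ¬ IncrCont f
    · obtain ⟨f1, hf1, hni⟩ := hP
      have hAnd := bigAnd_mem hF hfin hf1 hni
      left
      exact subset_antisymm (fun f hf => ⟨hFborel f hf, hFmono f hf, hFpb f hf⟩)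
        (N1_sub_F hF hfin hOr hAnd)
    · push_neg at hP
      right; left
      exact subset_antisymm (fun f hf => ⟨hFborel f hf, hP f hf, hFpb f hf⟩)
        (N2_sub_F hF hfin hOr)
  · push_neg at hQ
    by_cases hR : ∃ f ∈ F, ¬ DecrCont f
    · obtain ⟨f0, hf0, hnd⟩ := hR
      have hgz := gzf_mem hF hfin hf0 hnd (hQ f0 hf0)
      by_cases hP : ∃ f ∈ F, ¬ IncrCont f
      · obtain ⟨f1, hf1, hni⟩ := hP
        have hAnd := bigAnd_mem hF hfin hf1 hni
        right; right; left
        exact subset_antisymm (fun f hf => ⟨hFborel f hf, hFmono f hf, hQ f hf⟩)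
          (N3_sub_F hF hfin hgz hAnd)
      · push_neg at hP
        right; right; right; left
        exact subset_antisymm (fun f hf => ⟨hFborel f hf, hP f hf, hQ f hf⟩)
          (N4_sub_F hF hfin hgz)
    · push_neg at hR
      by_cases hP : ∃ f ∈ F, ¬ IncrCont f
      · obtain ⟨f1, hf1, hni⟩ := hP
        have hAnd := bigAnd_mem hF hfin hf1 hni
        right; right; right; right; left
        exact subset_antisymm (fun f hf => ⟨hFborel f hf, hR f hf, hFpb f hf⟩)
          (N5_sub_F hF hfin hAnd)
      · push_neg at hP
        right; right; right; right; right
        refine subset_antisymm ?_ (N6_sub_F hF hfin)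
        intro f hf
        refine ⟨?_, hFmono f hf, hFpb f hf⟩
        have hInc := hP f hf
        have hDec := hR f hf
        obtain ⟨a, g⟩ := f
        cases a with
        | some n => exact fin_continuous g
        | none => exact cont_of_incr_decr hInc hDec

end BCaux

/-- There are exactly six Borel clones whose finitary restriction is the set of all
finitary monotone `f` with `f(0⃗) = 0`, namely the Borel `f` which are:
(i) monotone with `f(0⃗) = 0`; (ii) increasing-continuous with `f(0⃗) = 0`;
(iii) monotone and vanishing near `0⃗`; (iv) increasing-continuous and vanishing near `0⃗`;
(v) decreasing-continuous with `f(0⃗) = 0` (every such `f` automatically vanishes near `0⃗`);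
(vi) continuous monotone with `f(0⃗) = 0`. -/
theorem borel_clones_over_MonoT0 :
    (∀ C ∈ [N1, N2, N3, N4, N5, N6], IsClone C ∧ C ⊆ BorelClass ∧
      finRes C = {f | finitary f ∧ Monotone f.2 ∧ PresBot f}) ∧
    List.Pairwise (· ≠ ·) [N1, N2, N3, N4, N5, N6] ∧
    (∀ f : BFun, DecrCont f → PresBot f → VanishNearBot f) ∧
    (∀ F : Set BFun, IsClone F → F ⊆ BorelClass →
      finRes F = {f | finitary f ∧ Monotone f.2 ∧ PresBot f} →
      F = N1 ∨ F = N2 ∨ F = N3 ∨ F = N4 ∨ F = N5 ∨ F = N6) := by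
  open BCaux in
  refine ⟨?_, ?_, decr_presBot_vanish, classify⟩
  · intro C hC
    simp only [List.mem_cons, List.not_mem_nil, or_false] at hC
    rcases hC with rfl | rfl | rfl | rfl | rfl | rfl
    · exact ⟨isClone_N1, N1_borel, finRes_N1⟩
    · exact ⟨isClone_N2, N2_borel, finRes_N2⟩
    · exact ⟨isClone_N3, N3_borel, finRes_N3⟩
    · exact ⟨isClone_N4, N4_borel, finRes_N4⟩
    · exact ⟨isClone_N5, N5_borel, finRes_N5⟩
    · exact ⟨isClone_N6, N6_borel, finRes_N6⟩
  · have d12 : N1 ≠ N2 := ne_of_wit _ and_N1 and_not_N2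
    have d13 : N1 ≠ N3 := ne_of_wit _ or_N1 or_not_N3
    have d14 : N1 ≠ N4 := ne_of_wit _ or_N1 or_not_N4
    have d15 : N1 ≠ N5 := ne_of_wit _ or_N1 or_not_N5
    have d16 : N1 ≠ N6 := ne_of_wit _ or_N1 or_not_N6
    have d23 : N2 ≠ N3 := ne_of_wit _ or_N2 or_not_N3
    have d24 : N2 ≠ N4 := ne_of_wit _ or_N2 or_not_N4
    have d25 : N2 ≠ N5 := ne_of_wit _ or_N2 or_not_N5
    have d26 : N2 ≠ N6 := ne_of_wit _ or_N2 or_not_N6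
    have d34 : N3 ≠ N4 := ne_of_wit _ and_N3 and_not_N4
    have d35 : N3 ≠ N5 := ne_of_wit _ gz_N3 gz_not_N5
    have d36 : N3 ≠ N6 := ne_of_wit _ and_N3 and_not_N6
    have d45 : N4 ≠ N5 := (ne_of_wit _ and_N5 and_not_N4).symm
    have d46 : N4 ≠ N6 := ne_of_wit _ gz_N4 gz_not_N6
    have d56 : N5 ≠ N6 := ne_of_wit _ and_N5 and_not_N6
    refine List.Pairwise.cons ?_ (List.Pairwise.cons ?_ (List.Pairwise.cons ?_
      (List.Pairwise.cons ?_ (List.Pairwise.cons ?_ (List.pairwise_singleton _ _)))))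
    · intro b hb
      simp only [List.mem_cons, List.not_mem_nil, or_false] at hb
      rcases hb with rfl | rfl | rfl | rfl | rfl
      exacts [d12, d13, d14, d15, d16]
    · intro b hb
      simp only [List.mem_cons, List.not_mem_nil, or_false] at hb
      rcases hb with rfl | rfl | rfl | rfl
      exacts [d23, d24, d25, d26]
    · intro b hb
      simp only [List.mem_cons, List.not_mem_nil, or_false] at hb
      rcases hb with rfl | rfl | rfl
      exacts [d34, d35, d36]
    · intro b hb
      simp only [List.mem_cons, List.not_mem_nil, or_false] at hb
      rcases hb with rfl | rfl
      exacts [d45, d46]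
    · intro b hb
      simp only [List.mem_cons, List.not_mem_nil, or_false] at hb
      rcases hb with rfl
      exact d56
end
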